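/- arXiv:1910.14387 — 5 statements merged into one kernel-verified Lean document; each statement's English description precedes it below -/
import Mathlib

section
/- Let TS be a reversible labelled transition system whose label set has exactly two elements. Then TS is solvable by a choice-free Petri net system if and only if TS is solvable by a weighted marked graph system. -/
/-
For a choice-free net over at most two labels whose reachability graph is reversible and has
more than one state, every nonempty cycle of firings uses both labels, because a label that fires
on its own around a cycle has null effect, and then reversibility leaves only one reachable
marking. Hence, if a place `p` tests its output `t` through a side loop, a cycle through any
reachable marking fires `t`, after which `p` holds at least `post t p` tokens and never falls
below that again. The side-loop tokens of `p` are thus permanently present: freezing them yields an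
isomorphic reachability graph and a pure choice-free net. Along a cycle no place gains tokens
under both labels, so in the pure net no place has two input transitions, i.e. it is a weighted
marked graph. With a single reachable marking, one blocking place per dead label does the job.
-/

/-- A labelled transition system with initial state. -/
structure LTS (S L : Type) where
  tr : S → L → S → Prop
  init : S

namespace LTS

/-- Reachability between states of an LTS (directed paths of arcs). -/
def reach {S L : Type} (A : LTS S L) : S → S → Prop :=
  Relation.ReflTransGen (fun s s' => ∃ t, A.tr s t s')

/-- An LTS is reversible if every state is reachable from the initial state
and the initial state is reachable from every state. -/
def reversible {S L : Type} (A : LTS S L) : Prop :=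
  ∀ s : S, A.reach A.init s ∧ A.reach s A.init

end LTS

/-- Isomorphism of labelled transition systems. -/
def ltsIso {S1 S2 L : Type} (A : LTS S1 L) (B : LTS S2 L) : Prop :=
  ∃ ζ : S1 ≃ S2, ζ A.init = B.init ∧ ∀ s t s', A.tr s t s' ↔ B.tr (ζ s) t (ζ s')

/-- A weighted Petri net with places `P` and transitions `T`:
`pre p t` is the weight of the arc from `p` to `t`, `post t p` of the arc from `t` to `p`. -/
structure PetriNet (P T : Type) where
  pre : P → T → ℕ
  post : T → P → ℕ

namespace PetriNet

variable {P T : Type}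

/-- A transition `t` is enabled at marking `M`. -/
def enabled (N : PetriNet P T) (M : P → ℕ) (t : T) : Prop :=
  ∀ p, N.pre p t ≤ M p

/-- A place `p` is enabled by a marking `M`. -/
def placeEnabled (N : PetriNet P T) (M : P → ℕ) (p : P) : Prop :=
  ∀ t, N.pre p t ≤ M p

/-- The marking obtained by firing `t` at `M`. -/
def fire (N : PetriNet P T) (M : P → ℕ) (t : T) : P → ℕ :=
  fun p => M p - N.pre p t + N.post t p

/-- `M [t⟩ M'`. -/
def step (N : PetriNet P T) (M : P → ℕ) (t : T) (M' : P → ℕ) : Prop :=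
  N.enabled M t ∧ M' = N.fire M t

/-- A marking `M'` is reachable from `M` by a finite sequence of firings. -/
def Reach (N : PetriNet P T) (M M' : P → ℕ) : Prop :=
  Relation.ReflTransGen (fun M1 M2 => ∃ t, N.step M1 t M2) M M'

/-- A sequence of transitions is firable from a marking. -/
def firable (N : PetriNet P T) : (P → ℕ) → List T → Prop
  | _, [] => True
  | M, t :: σ => N.enabled M t ∧ N.firable (N.fire M t) σ

/-- The marking reached after firing a sequence of transitions. -/
def fireSeq (N : PetriNet P T) : (P → ℕ) → List T → (P → ℕ)
  | M, [] => M
  | M, t :: σ => N.fireSeq (N.fire M t) σ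

/-- A net is choice-free if every place has at most one output transition. -/
def choiceFree (N : PetriNet P T) : Prop :=
  ∀ p t t', 0 < N.pre p t → 0 < N.pre p t' → t = t'

/-- A weighted marked graph: each place has at most one output and at most one input transition. -/
def wmg (N : PetriNet P T) : Prop :=
  N.choiceFree ∧ ∀ p t t', 0 < N.post t p → 0 < N.post t' p → t = t'

/-- A net is pure if no place is a side condition of some transition. -/
def isPure (N : PetriNet P T) : Prop :=
  ∀ p t, ¬(0 < N.pre p t ∧ 0 < N.post t p)

/-- Liveness: from every reachable marking, every transition can eventually fire again. -/
def live (N : PetriNet P T) (M0 : P → ℕ) : Prop :=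
  ∀ (t : T) (M : P → ℕ), N.Reach M0 M → ∃ M', N.Reach M M' ∧ N.enabled M' t

/-- The reachability graph of a system, as an LTS on the reachable markings. -/
def RG (N : PetriNet P T) (M0 : P → ℕ) : LTS {M : P → ℕ // N.Reach M0 M} T where
  tr := fun M t M' => N.step M.1 t M'.1
  init := ⟨M0, Relation.ReflTransGen.refl⟩

end PetriNet

/-- A system solves an LTS if its reachability graph is isomorphic to it. -/
def Solves {Pl T S : Type} (N : PetriNet Pl T) (M0 : Pl → ℕ) (A : LTS S T) : Prop :=
  ltsIso (N.RG M0) A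

/-- CF-solvability of an LTS. -/
def CFSolvable {S L : Type} (A : LTS S L) : Prop :=
  ∃ (k : ℕ) (N : PetriNet (Fin k) L) (M0 : Fin k → ℕ), N.choiceFree ∧ Solves N M0 A

/-- WMG-solvability of an LTS. -/
def WMGSolvable {S L : Type} (A : LTS S L) : Prop :=
  ∃ (k : ℕ) (N : PetriNet (Fin k) L) (M0 : Fin k → ℕ), N.wmg ∧ Solves N M0 A

/-- Solvability of an LTS by a pure choice-free system. -/
def PureCFSolvable {S L : Type} (A : LTS S L) : Prop :=
  ∃ (k : ℕ) (N : PetriNet (Fin k) L) (M0 : Fin k → ℕ),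
    N.choiceFree ∧ N.isPure ∧ Solves N M0 A

/-- The circular LTS induced by a (nonempty) word `w`. -/
def circLTS {L : Type} (w : List L) (hw : 0 < w.length) : LTS (Fin w.length) L where
  tr := fun s t s' => t = w.get s ∧ s'.val = (s.val + 1) % w.length
  init := ⟨0, hw⟩

/-- The Parikh vector of a word. -/
def parikh {L : Type} [DecidableEq L] (w : List L) (t : L) : ℕ := w.count t

/-- A vector of naturals is prime if the gcd of its components equals 1. -/
def primeVec {L : Type} [Fintype L] (Υ : L → ℕ) : Prop := Finset.univ.gcd Υ = 1

/-- A word is cyclically solvable by a WMG. -/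
def cyclicWMGSolvable {L : Type} (w : List L) : Prop :=
  ∃ (hw : 0 < w.length) (k : ℕ) (N : PetriNet (Fin k) L) (M0 : Fin k → ℕ),
    N.wmg ∧ Solves N M0 (circLTS w hw)

/-- A word is cyclically solvable by a CF net. -/
def cyclicCFSolvable {L : Type} (w : List L) : Prop :=
  ∃ (hw : 0 < w.length) (k : ℕ) (N : PetriNet (Fin k) L) (M0 : Fin k → ℕ),
    N.choiceFree ∧ Solves N M0 (circLTS w hw)

/-- A circuit net: places `p_0 … p_{k-1}` and transitions `τ 0 … τ (k-1)` arranged in a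
single alternating cycle, `τ i` being the unique output of `p_i` and the unique input
of `p_{i+1 mod k}`. -/
def isCircuit {k : ℕ} {L : Type} (hk : 0 < k) (N : PetriNet (Fin k) L) : Prop :=
  ∃ τ : Fin k ≃ L,
    (∀ (i : Fin k) (t : L), 0 < N.pre i t ↔ t = τ i) ∧
    (∀ (i : Fin k) (t : L), 0 < N.post t i ↔ t = τ ⟨(i.val + k - 1) % k, Nat.mod_lt _ hk⟩)

/-- A word is cyclically solvable by a circuit system. -/
def cyclicCircuitSolvable {L : Type} (v : List L) : Prop :=
  ∃ (hv : 0 < v.length) (k : ℕ) (hk : 0 < k) (N : PetriNet (Fin k) L) (M0 : Fin k → ℕ),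
    isCircuit hk N ∧ Solves N M0 (circLTS v hv)

/-- The ordered pair `a b` is circularly adjacent in `w`. -/
def cAdj {L : Type} (w : List L) (a b : L) : Prop :=
  a ≠ b ∧ ((∃ w1 w2, w = w1 ++ a :: b :: w2) ∨ ∃ w3, w = b :: w3 ++ [a])

/-- The projection of a word on a two-element sub-alphabet, as a word over that sub-alphabet. -/
def projPair {L : Type} [DecidableEq L] (w : List L) (a b : L) :
    List {x : L // x = a ∨ x = b} :=
  w.filterMap (fun x => if h : x = a ∨ x = b then some ⟨x, h⟩ else none)

/-- The Parikh vector `P_jq` of the segment of `w` read circularly from state `s_j`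
to state `s_q` (empty when `j = q`). -/
def segParikh {L : Type} [DecidableEq L] (w : List L) (hw : 0 < w.length)
    (j q : Fin w.length) (t : L) : ℕ :=
  ((List.range ((q.val + w.length - j.val) % w.length)).map
    (fun i => w.get ⟨(j.val + i) % w.length, Nat.mod_lt _ hw⟩)).count t

/-- A region of an LTS. -/
def isRegion {S L : Type} (A : LTS S L) (R : S → ℕ) (B F : L → ℕ) : Prop :=
  ∀ s t s', A.tr s t s' → B t ≤ R s ∧ R s' = R s - B t + F t

/-- `gcd_p`: the gcd of all (nonzero) input and output weights of a place. -/
def gcdPlace {Pl T : Type} [Fintype T] (N : PetriNet Pl T) (p : Pl) : ℕ :=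
  Finset.univ.gcd (fun t => Nat.gcd (N.pre p t) (N.post t p))

/-- Conservativeness of a net. -/
def conservative {Pl T : Type} [Fintype Pl] (N : PetriNet Pl T) : Prop :=
  ∃ X : Pl → ℕ, (∀ p, 1 ≤ X p) ∧
    ∀ t, ∑ p, (X p : ℤ) * ((N.post t p : ℤ) - (N.pre p t : ℤ)) = 0

/-- The P-subnet induced by a family of places. -/
def restrictNet {Pl T : Type} {k : ℕ} (N : PetriNet Pl T) (π : Fin k → Pl) :
    PetriNet (Fin k) T where
  pre := fun i t => N.pre (π i) t
  post := fun t i => N.post t (π i)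


theorem ltsIso.symm {S1 S2 L : Type} {A : LTS S1 L} {B : LTS S2 L} (h : ltsIso A B) :
    ltsIso B A := by
  obtain ⟨ζ, hinit, htr⟩ := h
  refine ⟨ζ.symm, by rw [← hinit, Equiv.symm_apply_apply], fun s t s' => ?_⟩
  rw [htr, Equiv.apply_symm_apply, Equiv.apply_symm_apply]

theorem ltsIso.trans {S1 S2 S3 L : Type} {A : LTS S1 L} {B : LTS S2 L} {C : LTS S3 L}
    (hAB : ltsIso A B) (hBC : ltsIso B C) : ltsIso A C := by
  obtain ⟨ζ, hζ, hζtr⟩ := hAB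
  obtain ⟨η, hη, hηtr⟩ := hBC
  exact ⟨ζ.trans η, by simp [hζ, hη], fun s t s' => (hζtr s t s').trans (hηtr _ t _)⟩

theorem ltsIso.reversible {S1 S2 L : Type} {A : LTS S1 L} {B : LTS S2 L} (h : ltsIso A B)
    (hA : A.reversible) : B.reversible := by
  obtain ⟨ζ, hinit, htr⟩ := h
  have hmap : ∀ s s', A.reach s s' → B.reach (ζ s) (ζ s') :=
    Relation.ReflTransGen.lift ζ fun _ _ ⟨t, hst⟩ => ⟨t, (htr _ t _).1 hst⟩
  intro s
  obtain ⟨hto, hfrom⟩ := hA (ζ.symm s)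
  rw [← hinit, ← ζ.apply_symm_apply s]
  exact ⟨hmap _ _ hto, hmap _ _ hfrom⟩

theorem Fintype.eq_or_eq_of_card_le_two {T : Type} [Fintype T] (hT : Fintype.card T ≤ 2)
    {x y : T} (hxy : x ≠ y) (t : T) : t = x ∨ t = y := by
  classical
  by_contra! h
  have := Finset.card_le_univ ({t, x, y} : Finset T)
  rw [Finset.card_insert_of_notMem (by simp [h.1, h.2]), Finset.card_pair hxy] at this
  omega

namespace PetriNet

variable {P Q T : Type}

theorem reach_init_of_reversible {N : PetriNet P T} {M0 M : P → ℕ}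
    (hrev : (N.RG M0).reversible) (hM : N.Reach M0 M) : N.Reach M M0 :=
  Relation.ReflTransGen.lift Subtype.val (fun _ _ ⟨t, ht⟩ => ⟨t, ht⟩) _ _ (hrev ⟨M, hM⟩).2

theorem ltsIso_RG_of_map (N : PetriNet P T) (N' : PetriNet Q T) (M0 : P → ℕ)
    (f : (P → ℕ) → Q → ℕ)
    (hinj : ∀ M M', N.Reach M0 M → N.Reach M0 M' → f M = f M' → M = M')
    (henabled : ∀ M, N.Reach M0 M → ∀ t, N'.enabled (f M) t ↔ N.enabled M t)
    (hfire : ∀ M, N.Reach M0 M → ∀ t, N.enabled M t → N'.fire (f M) t = f (N.fire M t)) :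
    ltsIso (N.RG M0) (N'.RG (f M0)) := by
  have hfwd : ∀ M, N.Reach M0 M → N'.Reach (f M0) (f M) := by
    intro M hM
    induction hM with
    | refl => exact .refl
    | tail hM hstep ih =>
      obtain ⟨t, ht, rfl⟩ := hstep
      exact ih.tail ⟨t, (henabled _ hM t).2 ht, (hfire _ hM t ht).symm⟩
  have hbwd : ∀ X, N'.Reach (f M0) X → ∃ M, N.Reach M0 M ∧ f M = X := by
    intro X hX
    induction hX with
    | refl => exact ⟨M0, .refl, rfl⟩
    | tail _ hstep ih =>
      obtain ⟨M, hM, rfl⟩ := ih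
      obtain ⟨t, ht, rfl⟩ := hstep
      have ht' := (henabled M hM t).1 ht
      exact ⟨N.fire M t, hM.tail ⟨t, ht', rfl⟩, (hfire M hM t ht').symm⟩
  have hbij : Function.Bijective
      (fun M : {M // N.Reach M0 M} => (⟨f M.1, hfwd M.1 M.2⟩ : {X // N'.Reach (f M0) X})) := by
    refine ⟨fun M M' h => Subtype.ext (hinj _ _ M.2 M'.2 (congrArg Subtype.val h)), fun X => ?_⟩
    obtain ⟨M, hM, hX⟩ := hbwd X.1 X.2
    exact ⟨⟨M, hM⟩, Subtype.ext hX⟩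
  refine ⟨Equiv.ofBijective _ hbij, rfl, ?_⟩
  rintro ⟨M, hM⟩ t ⟨M', hM'⟩
  change N.step M t M' ↔ N'.step (f M) t (f M')
  constructor
  · rintro ⟨ht, rfl⟩
    exact ⟨(henabled M hM t).2 ht, (hfire M hM t ht).symm⟩
  · rintro ⟨ht, hM'fire⟩
    have ht' := (henabled M hM t).1 ht
    exact ⟨ht', hinj _ _ hM' (hM.tail ⟨t, ht', rfl⟩) (hM'fire.trans (hfire M hM t ht'))⟩

section FiringSequences

variable {N : PetriNet P T}

theorem fireSeq_append (M : P → ℕ) (σ τ : List T) :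
    N.fireSeq M (σ ++ τ) = N.fireSeq (N.fireSeq M σ) τ := by
  induction σ generalizing M with
  | nil => rfl
  | cons t σ ih => exact ih _

theorem firable_append (M : P → ℕ) (σ τ : List T) :
    N.firable M (σ ++ τ) ↔ N.firable M σ ∧ N.firable (N.fireSeq M σ) τ := by
  induction σ generalizing M with
  | nil => simp [firable, fireSeq]
  | cons t σ ih => simp only [List.cons_append, firable, fireSeq, ih, and_assoc]

theorem Reach.exists_firable {M M' : P → ℕ} (h : N.Reach M M') :
    ∃ σ, N.firable M σ ∧ N.fireSeq M σ = M' := by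
  induction h with
  | refl => exact ⟨[], trivial, rfl⟩
  | tail _ hstep ih =>
    obtain ⟨σ, hσ, rfl⟩ := ih
    obtain ⟨t, ht, rfl⟩ := hstep
    exact ⟨σ ++ [t], (firable_append _ _ _).2 ⟨hσ, ht, trivial⟩, fireSeq_append _ _ _⟩

def isCycle (N : PetriNet P T) (M : P → ℕ) (σ : List T) : Prop :=
  σ ≠ [] ∧ N.firable M σ ∧ N.fireSeq M σ = M

theorem exists_isCycle {M M' : P → ℕ} (h : N.Reach M M') (h' : N.Reach M' M) (hne : M ≠ M') :
    ∃ σ, N.isCycle M σ := by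
  obtain ⟨σ, hσ, hσM⟩ := h.exists_firable
  obtain ⟨τ, hτ, hτM⟩ := h'.exists_firable
  refine ⟨σ ++ τ, fun hnil => hne ?_, (firable_append _ _ _).2 ⟨hσ, hσM ▸ hτ⟩, ?_⟩
  · rw [List.append_eq_nil_iff.1 hnil |>.1] at hσM
    exact hσM
  · rw [fireSeq_append, hσM, hτM]

end FiringSequences

def effect (N : PetriNet P T) (t : T) (p : P) : ℤ := N.post t p - N.pre p t

theorem fireSeq_eq_add_sum {N : PetriNet P T} {M : P → ℕ} {σ : List T} (hσ : N.firable M σ)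
    (p : P) : (N.fireSeq M σ p : ℤ) = M p + (σ.map (N.effect · p)).sum := by
  induction σ generalizing M with
  | nil => simp [fireSeq]
  | cons t σ ih =>
    obtain ⟨ht, hσ⟩ := hσ
    have hpre := ht p
    rw [fireSeq, ih hσ, List.map_cons, List.sum_cons, fire, effect]
    omega

theorem eq_of_reach_of_reach_of_effect_eq_zero {N : PetriNet P T} (x : T)
    (hzero : ∀ t ≠ x, ∀ p, N.effect t p = 0) {M M' : P → ℕ}
    (h : N.Reach M M') (h' : N.Reach M' M) : M = M' := by
  classical
  obtain ⟨σ, hσ, hσM⟩ := h.exists_firable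
  obtain ⟨τ, hτ, hτM⟩ := h'.exists_firable
  funext p
  have hsum : ∀ ρ : List T, (ρ.map (N.effect · p)).sum = ρ.count x • N.effect x p := fun ρ =>
    List.sum_map_eq_nsmul_single x _ fun t ht _ => hzero t ht p
  have hgo := fireSeq_eq_add_sum hσ p
  have hreturn := fireSeq_eq_add_sum hτ p
  rw [hσM, hsum, nsmul_eq_mul] at hgo
  rw [hτM, hsum, nsmul_eq_mul] at hreturn
  have hround : ((σ.count x + τ.count x : ℕ) : ℤ) * N.effect x p = 0 := by push_cast; linarith
  have hσx : (σ.count x : ℤ) * N.effect x p = 0 := by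
    rcases mul_eq_zero.1 hround with hcount | heff
    · simp [show σ.count x = 0 by omega]
    · simp [heff]
  exact_mod_cast (by linarith : (M p : ℤ) = M' p)

theorem post_le_fireSeq_of_le {N : PetriNet P T} {p : P} {x : T}
    (hp : ∀ t ≠ x, N.pre p t = 0) {M : P → ℕ} (hM : N.post x p ≤ M p) (σ : List T) :
    N.post x p ≤ N.fireSeq M σ p := by
  induction σ generalizing M with
  | nil => exact hM
  | cons t σ ih =>
    refine ih ?_
    by_cases htx : t = x
    · subst htx; simp only [fire]; omega
    · simp only [fire, hp t htx]; omega

theorem post_le_fireSeq_of_mem {N : PetriNet P T} {p : P} {x : T}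
    (hp : ∀ t ≠ x, N.pre p t = 0) (M : P → ℕ) {σ : List T} (hx : x ∈ σ) :
    N.post x p ≤ N.fireSeq M σ p := by
  induction σ generalizing M with
  | nil => simp at hx
  | cons t σ ih =>
    by_cases htx : t = x
    · subst htx
      exact post_le_fireSeq_of_le hp (by simp only [fire]; omega) σ
    · exact ih _ ((List.mem_cons.1 hx).resolve_left (Ne.symm htx))

/-- Freezes `s p` tokens in each place `p`; an output arc loses the frozen tokens that its
transition used to test and give back, so that effects are unchanged. -/
def shift (N : PetriNet P T) (s : P → ℕ) : PetriNet P T where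
  pre p t := N.pre p t - s p
  post t p := N.post t p - min (N.pre p t) (s p)

section Shift

variable {N : PetriNet P T} {s : P → ℕ}

theorem effect_shift (hside : ∀ p t, min (N.pre p t) (s p) ≤ N.post t p) (t : T) (p : P) :
    (N.shift s).effect t p = N.effect t p := by
  have := hside p t
  simp only [effect, shift]
  omega

theorem ltsIso_RG_shift (M0 : P → ℕ) (hside : ∀ p t, min (N.pre p t) (s p) ≤ N.post t p)
    (hs : ∀ M, N.Reach M0 M → s ≤ M) : ltsIso (N.RG M0) ((N.shift s).RG (M0 - s)) := by
  refine N.ltsIso_RG_of_map _ M0 (· - s) (fun M M' hM hM' h => funext fun p => ?_)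
    (fun M hM t => forall_congr' fun p => ?_) (fun M hM t ht => funext fun p => ?_)
  · have := congrFun h p
    have : s p ≤ M p := hs M hM p
    have : s p ≤ M' p := hs M' hM' p
    simp only [Pi.sub_apply] at *
    omega
  · have : s p ≤ M p := hs M hM p
    simp only [shift, Pi.sub_apply]
    omega
  · have : s p ≤ M p := hs M hM p
    have := ht p
    have := hside p t
    simp only [fire, shift, Pi.sub_apply]
    omega

end Shift

/-- For a choice-free net, the tokens that the unique output of `p` tests and gives back. -/
def loopWeight [Fintype T] (N : PetriNet P T) (p : P) : ℕ :=
  ∑ t, min (N.pre p t) (N.post t p)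

section LoopWeight

variable [Fintype T] {N : PetriNet P T}

theorem loopWeight_eq_of_pre_pos (hCF : N.choiceFree) {p : P} {t : T} (ht : 0 < N.pre p t) :
    N.loopWeight p = min (N.pre p t) (N.post t p) := by
  refine Finset.sum_eq_single t (fun u _ hut => ?_) (by simp)
  rw [Nat.eq_zero_of_not_pos fun hu => hut (hCF p u t hu ht)]
  exact Nat.zero_min _

theorem loopWeight_eq_zero {p : P} (hp : ∀ t, N.pre p t = 0) : N.loopWeight p = 0 := by
  simp [loopWeight, hp]

theorem min_pre_loopWeight_le_post (hCF : N.choiceFree) (p : P) (t : T) :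
    min (N.pre p t) (N.loopWeight p) ≤ N.post t p := by
  rcases Nat.eq_zero_or_pos (N.pre p t) with ht | ht
  · simp [ht]
  · rw [loopWeight_eq_of_pre_pos hCF ht]
    omega

theorem isPure_shift_loopWeight (hCF : N.choiceFree) : (N.shift N.loopWeight).isPure := by
  intro p t
  rcases Nat.eq_zero_or_pos (N.pre p t) with ht | ht
  · simp [shift, ht]
  · simp only [shift, loopWeight_eq_of_pre_pos hCF ht]
    omega

theorem wmg_shift_loopWeight (hCF : N.choiceFree)
    (heffect : ∀ p t t', t ≠ t' → ¬(0 < N.effect t p ∧ 0 < N.effect t' p)) :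
    (N.shift N.loopWeight).wmg := by
  refine ⟨fun p t t' ht ht' => hCF p t t' (ht.trans_le (Nat.sub_le _ _))
    (ht'.trans_le (Nat.sub_le _ _)), fun p t t' ht ht' => ?_⟩
  -- in a pure net an input arc of `p` is never also an output arc, so it raises the marking
  have hpos : ∀ u, 0 < (N.shift N.loopWeight).post u p → 0 < N.effect u p := by
    intro u hu
    have := isPure_shift_loopWeight hCF p u
    rw [← effect_shift (min_pre_loopWeight_le_post hCF), effect]
    omega
  by_contra htt'
  exact heffect p t t' htt' ⟨hpos t ht, hpos t' ht'⟩

end LoopWeight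

noncomputable def blockingNet [Fintype T] (E : T → Prop) [DecidablePred E] :
    PetriNet (Fin (Fintype.card T)) T where
  pre i t := if Fintype.equivFin T t = i ∧ ¬E t then 1 else 0
  post _ _ := 0

section BlockingNet

variable [Fintype T] (E : T → Prop) [DecidablePred E]

theorem wmg_blockingNet : (blockingNet E).wmg := by
  refine ⟨fun i t t' ht ht' => ?_, fun _ _ _ ht => absurd ht (lt_irrefl 0)⟩
  simp only [blockingNet, Nat.pos_iff_ne_zero, ne_eq, ite_eq_right_iff, not_forall] at ht ht'
  exact (Fintype.equivFin T).injective (ht.1.1.trans ht'.1.1.symm)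

theorem enabled_blockingNet_zero_iff (t : T) : (blockingNet E).enabled 0 t ↔ E t := by
  refine ⟨fun h => ?_, fun h i => by simp [blockingNet, h]⟩
  by_contra hE
  simpa [blockingNet, hE] using h (Fintype.equivFin T t)

theorem ltsIso_RG_blockingNet (N : PetriNet P T) (M0 : P → ℕ) [DecidablePred (N.enabled M0)]
    (hsingle : ∀ M, N.Reach M0 M → M = M0) :
    ltsIso (N.RG M0) ((blockingNet (N.enabled M0)).RG 0) :=
  N.ltsIso_RG_of_map _ M0 (fun _ => 0)
    (fun M M' hM hM' _ => (hsingle M hM).trans (hsingle M' hM').symm)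
    (fun M hM t => by rw [hsingle M hM]; exact enabled_blockingNet_zero_iff _ t)
    (fun _ _ _ _ => funext fun _ => by simp [fire, blockingNet])

end BlockingNet

section TwoLabels

variable {N : PetriNet P T} {M0 : P → ℕ}

theorem exists_isCycle_of_reach (hback : ∀ M, N.Reach M0 M → N.Reach M M0)
    (hnt : ∃ M, N.Reach M0 M ∧ M ≠ M0) {M : P → ℕ} (hM : N.Reach M0 M) :
    ∃ σ, N.isCycle M σ := by
  by_cases hM0 : M = M0
  · obtain ⟨M1, hM1, hne⟩ := hnt
    subst hM0
    exact exists_isCycle hM1 (hback M1 hM1) hne.symm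
  · exact exists_isCycle (hback M hM) hM hM0

variable [Fintype T]

theorem mem_of_isCycle (hT : Fintype.card T ≤ 2) (hback : ∀ M, N.Reach M0 M → N.Reach M M0)
    (hnt : ∃ M, N.Reach M0 M ∧ M ≠ M0) {M : P → ℕ} {σ : List T} (hσ : N.isCycle M σ)
    (x : T) : x ∈ σ := by
  classical
  by_contra hx
  obtain ⟨y, hy⟩ := List.exists_mem_of_ne_nil σ hσ.1
  have hyx : y ≠ x := ne_of_mem_of_not_mem hy hx
  have hother : ∀ t ≠ x, t = y := fun t htx =>
    (Fintype.eq_or_eq_of_card_le_two hT hyx t).resolve_right htx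
  have heffect : ∀ p, N.effect y p = 0 := by
    intro p
    have h := fireSeq_eq_add_sum hσ.2.1 p
    rw [hσ.2.2, List.sum_map_eq_nsmul_single y _ fun t hty ht =>
      absurd (hother t (ne_of_mem_of_not_mem ht hx)) hty, nsmul_eq_mul] at h
    have hcount : 0 < σ.count y := List.count_pos_iff.2 hy
    have : (σ.count y : ℤ) * N.effect y p = 0 := by linarith
    exact (mul_eq_zero.1 this).resolve_left (by exact_mod_cast hcount.ne')
  obtain ⟨M1, hM1, hne⟩ := hnt
  exact hne (eq_of_reach_of_reach_of_effect_eq_zero x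
    (fun t htx => hother t htx ▸ heffect) hM1 (hback M1 hM1)).symm

theorem not_effect_pos_and_effect_pos (hT : Fintype.card T ≤ 2)
    (hback : ∀ M, N.Reach M0 M → N.Reach M M0) (hnt : ∃ M, N.Reach M0 M ∧ M ≠ M0)
    {t t' : T} (htt' : t ≠ t') (p : P) :
    ¬(0 < N.effect t p ∧ 0 < N.effect t' p) := by
  rintro ⟨ht, ht'⟩
  obtain ⟨σ, hσnil, hσ, hσM0⟩ := exists_isCycle_of_reach hback hnt .refl
  have hpos : ∀ e ∈ σ.map (N.effect · p), 0 < e := by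
    simp only [List.mem_map]
    rintro _ ⟨u, -, rfl⟩
    rcases Fintype.eq_or_eq_of_card_le_two hT htt' u with rfl | rfl <;> assumption
  have := fireSeq_eq_add_sum hσ p
  rw [hσM0] at this
  have := List.sum_pos _ hpos (by simpa using hσnil)
  omega

theorem loopWeight_le_of_reach (hT : Fintype.card T ≤ 2)
    (hback : ∀ M, N.Reach M0 M → N.Reach M M0) (hnt : ∃ M, N.Reach M0 M ∧ M ≠ M0)
    (hCF : N.choiceFree) {M : P → ℕ} (hM : N.Reach M0 M) :
    N.loopWeight ≤ M := by
  intro p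
  by_cases hout : ∃ t, 0 < N.pre p t
  · obtain ⟨t, ht⟩ := hout
    obtain ⟨σ, hσ⟩ := exists_isCycle_of_reach hback hnt hM
    have hp : ∀ u ≠ t, N.pre p u = 0 := fun u hut =>
      Nat.eq_zero_of_not_pos fun hu => hut (hCF p u t hu ht)
    have := post_le_fireSeq_of_mem hp M (mem_of_isCycle hT hback hnt hσ t)
    rw [hσ.2.2] at this
    rw [loopWeight_eq_of_pre_pos hCF ht]
    exact (min_le_right _ _).trans this
  · simp only [not_exists, not_lt, Nat.le_zero] at hout
    simp [loopWeight_eq_zero hout]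

end TwoLabels

end PetriNet

open PetriNet in
/-- a reversible LTS over two labels is CF-solvable iff it is WMG-solvable. -/
theorem stmt1 {S L : Type} [Fintype L] (hcard : Fintype.card L = 2)
    (A : LTS S L) (hrev : A.reversible) : CFSolvable A ↔ WMGSolvable A := by
  classical
  refine ⟨fun ⟨k, N, M0, hCF, hsol⟩ => ?_, fun ⟨k, N, M0, hwmg, hsol⟩ => ⟨k, N, M0, hwmg.1, hsol⟩⟩
  have hback : ∀ M, N.Reach M0 M → N.Reach M M0 := fun _ =>
    reach_init_of_reversible ((ltsIso.symm hsol).reversible hrev)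
  by_cases hsingle : ∀ M, N.Reach M0 M → M = M0
  · exact ⟨_, blockingNet (N.enabled M0), 0, wmg_blockingNet _,
      (ltsIso_RG_blockingNet N M0 hsingle).symm.trans hsol⟩
  · have hnt : ∃ M, N.Reach M0 M ∧ M ≠ M0 := by simpa using hsingle
    exact ⟨k, N.shift N.loopWeight, M0 - N.loopWeight,
      wmg_shift_loopWeight hCF fun p _ _ htt' =>
        not_effect_pos_and_effect_pos hcard.le hback hnt htt' p,
      (ltsIso_RG_shift M0 (min_pre_loopWeight_le_post hCF)
        fun _ => loopWeight_le_of_reach hcard.le hback hnt hCF).symm.trans hsol⟩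
end

section
/- Let w be a word over a finite alphabet T whose Parikh vector P(w) is prime. Suppose that for every pair of circularly adjacent labels t1,t2 of w, the projection u of w on {t1,t2} can be written u=v^ℓ for some positive integer ℓ, where the Parikh vector P(v) is prime and v is cyclically solvable by a circuit system. Then w is cyclically solvable by a weighted marked graph. -/
/-!
For every circularly adjacent pair `a b`, run the circuit system solving `v` along the
projection of `w w w …` on `{a, b}`, which is `v v v …`. Side by side, together with unmarked
places disabling the letters absent from `w`, these circuits form a weighted marked graph. After
`j` letters, a letter `t ≠ w_j` of `w` is disabled by the component of the pair `s t`, where `s`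
is the letter just before the next occurrence of `t`: that component expects `s` first. So the
only firing sequence is `w w w …`, and its markings repeat exactly with period `|w|`: a
repetition after `d` steps makes `w` cyclically `d`-periodic, hence `gcd(d, |w|)`-periodic, and
then `|w| / gcd(d, |w|)` divides every entry of the prime Parikh vector.
-/

theorem Function.Periodic.nat_gcd {α : Type*} {f : ℕ → α} {m n : ℕ}
    (hm : Function.Periodic f m) (hn : Function.Periodic f n) :
    Function.Periodic f (Nat.gcd m n) := by
  induction m, n using Nat.gcd.induction with
  | H0 n => simpa using hn
  | H1 m n _ ih =>
    rw [Nat.gcd_rec]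
    refine ih (fun x => ?_) hm
    calc f (x + n % m) = f (x + n % m + n / m * m) := (hm.nat_mul (n / m) _).symm
      _ = f (x + n) := by rw [add_assoc, Nat.mod_add_div']
      _ = f x := hn x

section CyclicWord

variable {L : Type}

def cycLetter (w : List L) (hw : 0 < w.length) (i : ℕ) : L :=
  w[i % w.length]'(Nat.mod_lt _ hw)

def cycPrefix (w : List L) (hw : 0 < w.length) (j : ℕ) : List L :=
  (List.range j).map (cycLetter w hw)

variable (w : List L) (hw : 0 < w.length)

theorem cycLetter_periodic : Function.Periodic (cycLetter w hw) w.length := by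
  intro i
  simp [cycLetter]

theorem cycLetter_periodic_mul (m : ℕ) : Function.Periodic (cycLetter w hw) (m * w.length) := by
  simpa using (cycLetter_periodic w hw).nat_mul m

theorem cycLetter_of_lt {i : ℕ} (hi : i < w.length) : cycLetter w hw i = w[i] := by
  simp [cycLetter, Nat.mod_eq_of_lt hi]

theorem cycPrefix_succ (j : ℕ) :
    cycPrefix w hw (j + 1) = cycPrefix w hw j ++ [cycLetter w hw j] := by
  simp [cycPrefix, List.range_succ]

theorem cycPrefix_of_le {j : ℕ} (hj : j ≤ w.length) : cycPrefix w hw j = w.take j := by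
  apply List.ext_getElem
  · simp [cycPrefix, hj]
  · intro i hi _
    simp only [cycPrefix, List.getElem_map, List.getElem_range, List.getElem_take]
    exact cycLetter_of_lt w hw (by simp [cycPrefix] at hi; omega)

theorem cycPrefix_length : cycPrefix w hw w.length = w := by
  rw [cycPrefix_of_le w hw le_rfl, List.take_length]

theorem cycPrefix_add_of_periodic {a : ℕ} (ha : Function.Periodic (cycLetter w hw) a) (b : ℕ) :
    cycPrefix w hw (a + b) = cycPrefix w hw a ++ cycPrefix w hw b := by
  simp only [cycPrefix, List.range_add, List.map_append, List.map_map]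
  congr 2
  funext i
  simp [add_comm a i, ha i]

theorem count_cycPrefix_mul [DecidableEq L] {g : ℕ} (hg : Function.Periodic (cycLetter w hw) g)
    (m : ℕ) (t : L) : (cycPrefix w hw (m * g)).count t = m * (cycPrefix w hw g).count t := by
  induction m with
  | zero => simp [cycPrefix]
  | succ m ih =>
    have hmg : Function.Periodic (cycLetter w hw) (m * g) := by
      simpa using hg.nat_mul m
    rw [add_mul, one_mul, cycPrefix_add_of_periodic w hw hmg, List.count_append, ih]
    ring

theorem length_dvd_of_periodic_cycLetter [Fintype L] [DecidableEq L]
    (hprime : primeVec (fun t => parikh w t)) {d : ℕ}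
    (hd : Function.Periodic (cycLetter w hw) d) : w.length ∣ d := by
  set g := Nat.gcd d w.length
  have hg : Function.Periodic (cycLetter w hw) g := hd.nat_gcd (cycLetter_periodic w hw)
  have hgn : w.length / g * g = w.length := Nat.div_mul_cancel (Nat.gcd_dvd_right d w.length)
  have hdvd : w.length / g ∣ 1 := by
    rw [← hprime]
    refine Finset.dvd_gcd fun t _ => ⟨(cycPrefix w hw g).count t, ?_⟩
    rw [parikh, ← count_cycPrefix_mul w hw hg, hgn, cycPrefix_length]
  rw [Nat.dvd_one.mp hdvd, one_mul] at hgn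
  rw [← hgn]
  exact Nat.gcd_dvd_left d w.length

end CyclicWord

theorem length_pos_of_primeVec {L : Type} [Fintype L] [DecidableEq L] {w : List L}
    (hprime : primeVec (fun t => parikh w t)) : 0 < w.length := by
  rw [List.length_pos_iff]
  rintro rfl
  have hzero : Finset.univ.gcd (fun t => parikh ([] : List L) t) = 0 :=
    Finset.gcd_eq_zero_iff.mpr fun _ _ => List.count_nil
  exact zero_ne_one (hzero.symm.trans hprime)

namespace PetriNet

variable {P L : Type}

section CycleRun

variable (N : PetriNet P L)

def IsCycleRun (w : List L) (hw : 0 < w.length) (M : ℕ → P → ℕ) : Prop :=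
  ∀ j t M', N.step (M j) t M' ↔ t = cycLetter w hw j ∧ M' = M (j + 1)

variable {N} {w : List L} {hw : 0 < w.length} {M : ℕ → P → ℕ}

theorem IsCycleRun.of_step (hstep : ∀ j, N.step (M j) (cycLetter w hw j) (M (j + 1)))
    (honly : ∀ j t M', N.step (M j) t M' → t = cycLetter w hw j) : N.IsCycleRun w hw M := by
  intro j t M'
  constructor
  · intro h
    obtain rfl := honly j t M' h
    exact ⟨rfl, h.2.trans (hstep j).2.symm⟩
  · rintro ⟨rfl, rfl⟩
    exact hstep j

theorem IsCycleRun.step (h : N.IsCycleRun w hw M) (j : ℕ) :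
    N.step (M j) (cycLetter w hw j) (M (j + 1)) :=
  (h j _ _).2 ⟨rfl, rfl⟩

theorem IsCycleRun.next_eq (h : N.IsCycleRun w hw M) {a b : ℕ} (hab : M a = M b) :
    cycLetter w hw a = cycLetter w hw b ∧ M (a + 1) = M (b + 1) := by
  have hstep := h.step a
  rw [hab] at hstep
  exact (h b _ _).1 hstep

/-- Determinism propagates a repeated marking forever, so the letters repeat as well. -/
theorem IsCycleRun.periodic_of_eq (h : N.IsCycleRun w hw M) {i d : ℕ} (hid : M i = M (i + d)) :
    Function.Periodic (cycLetter w hw) d := by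
  have hshift : ∀ k, M (i + k) = M (i + d + k) := by
    intro k
    induction k with
    | zero => exact hid
    | succ k ih => exact (h.next_eq ih).2
  have hper := cycLetter_periodic_mul w hw i
  have hi : i ≤ i * w.length := Nat.le_mul_of_pos_right i hw
  intro x
  have hletter := (h.next_eq (hshift (x + i * w.length - i))).1
  rw [show i + (x + i * w.length - i) = x + i * w.length by omega,
    show i + d + (x + i * w.length - i) = x + d + i * w.length by omega, hper, hper] at hletter
  exact hletter.symm

theorem IsCycleRun.eq_iff [Fintype L] [DecidableEq L] (h : N.IsCycleRun w hw M)
    (hM : Function.Periodic M w.length) (hprime : primeVec (fun t => parikh w t)) {i j : ℕ} :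
    M i = M j ↔ i % w.length = j % w.length := by
  constructor
  · intro hij
    wlog hle : i ≤ j generalizing i j
    · exact (this hij.symm (by omega)).symm
    obtain ⟨d, rfl⟩ := Nat.exists_eq_add_of_le hle
    obtain ⟨c, rfl⟩ := length_dvd_of_periodic_cycLetter w hw hprime (h.periodic_of_eq hij)
    simp
  · intro hij
    rw [← hM.map_mod_nat i, ← hM.map_mod_nat j, hij]

theorem IsCycleRun.reach_iff (h : N.IsCycleRun w hw M) {X : P → ℕ} :
    N.Reach (M 0) X ↔ ∃ j, X = M j := by
  constructor
  · intro hX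
    induction hX with
    | refl => exact ⟨0, rfl⟩
    | tail _ hs ih =>
      obtain ⟨j, rfl⟩ := ih
      obtain ⟨t, ht⟩ := hs
      exact ⟨j + 1, ((h j t _).1 ht).2⟩
  · rintro ⟨j, rfl⟩
    induction j with
    | zero => exact .refl
    | succ j ih => exact ih.tail ⟨_, h.step j⟩

theorem IsCycleRun.solves [Fintype L] [DecidableEq L] (h : N.IsCycleRun w hw M)
    (hM : Function.Periodic M w.length) (hprime : primeVec (fun t => parikh w t)) :
    Solves N (M 0) (circLTS w hw) := by
  let f : Fin w.length → {X // N.Reach (M 0) X} := fun j => ⟨M j, h.reach_iff.2 ⟨j, rfl⟩⟩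
  have hinj : Function.Injective f := by
    intro i j hij
    have hmod := (h.eq_iff hM hprime).1 (congrArg Subtype.val hij)
    exact Fin.ext (by simpa [Nat.mod_eq_of_lt i.2, Nat.mod_eq_of_lt j.2] using hmod)
  have hsurj : Function.Surjective f := by
    rintro ⟨X, hX⟩
    obtain ⟨j, rfl⟩ := h.reach_iff.1 hX
    exact ⟨⟨j % w.length, Nat.mod_lt _ hw⟩, Subtype.ext (hM.map_mod_nat j)⟩
  let ζ := Equiv.ofBijective f ⟨hinj, hsurj⟩
  refine ⟨ζ.symm, ζ.symm_apply_eq.2 rfl, ?_⟩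
  intro X t X'
  obtain ⟨i, rfl⟩ := ζ.surjective X
  obtain ⟨j, rfl⟩ := ζ.surjective X'
  rw [ζ.symm_apply_apply, ζ.symm_apply_apply]
  show N.step (M i) t (M j) ↔ t = w.get i ∧ j.val = (i.val + 1) % w.length
  rw [h i t, h.eq_iff hM hprime, Nat.mod_eq_of_lt j.2, cycLetter_of_lt w hw i.2]
  rfl

end CycleRun

def liftAlphabet {p : L → Prop} [DecidablePred p] (N : PetriNet P {x // p x}) : PetriNet P L where
  pre q t := if h : p t then N.pre q ⟨t, h⟩ else 0
  post t q := if h : p t then N.post ⟨t, h⟩ q else 0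

section LiftAlphabet

variable {p : L → Prop} [DecidablePred p] (N : PetriNet P {x // p x}) {M M' : P → ℕ} {t : L}

theorem step_liftAlphabet_of_mem (ht : p t) : N.liftAlphabet.step M t M' ↔ N.step M ⟨t, ht⟩ M' := by
  simp only [step, enabled, fire, liftAlphabet, dif_pos ht, funext_iff]

theorem step_liftAlphabet_of_not_mem (ht : ¬p t) : N.liftAlphabet.step M t M' ↔ M' = M := by
  simp [step, enabled, fire, liftAlphabet, ht, funext_iff]

theorem wmg_liftAlphabet (hN : N.wmg) : N.liftAlphabet.wmg := by
  have key : ∀ {f : {x // p x} → ℕ} {t t' : L},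
      (∀ s s' : {x // p x}, 0 < f s → 0 < f s' → s = s') →
      0 < (if h : p t then f ⟨t, h⟩ else 0) → 0 < (if h : p t' then f ⟨t', h⟩ else 0) → t = t' := by
    intro f t t' hf h h'
    split_ifs at h h' with ht ht'
    · exact congrArg Subtype.val (hf _ _ h h')
    all_goals omega
  exact ⟨fun q _ _ => key (hN.1 q), fun q _ _ => key (fun s s' => hN.2 q s s')⟩

end LiftAlphabet

def sigma {ι : Type} {Q : ι → Type} (N : ∀ i, PetriNet (Q i) L) : PetriNet (Σ i, Q i) L where
  pre q t := (N q.1).pre q.2 t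
  post t q := (N q.1).post t q.2

theorem step_sigma {ι : Type} {Q : ι → Type} (N : ∀ i, PetriNet (Q i) L) {M M' : (Σ i, Q i) → ℕ}
    {t : L} : (sigma N).step M t M' ↔
      ∀ i, (N i).step (fun q => M ⟨i, q⟩) t (fun q => M' ⟨i, q⟩) := by
  simp only [step, enabled, fire, sigma, Sigma.forall, funext_iff]
  exact ⟨fun h i => ⟨h.1 i, h.2 i⟩, fun h => ⟨fun i => (h i).1, fun i => (h i).2⟩⟩

theorem wmg_sigma {ι : Type} {Q : ι → Type} {N : ∀ i, PetriNet (Q i) L} (hN : ∀ i, (N i).wmg) :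
    (sigma N).wmg :=
  ⟨fun q => (hN q.1).1 q.2, fun q => (hN q.1).2 q.2⟩

def sum {P₁ P₂ : Type} (N₁ : PetriNet P₁ L) (N₂ : PetriNet P₂ L) : PetriNet (P₁ ⊕ P₂) L where
  pre := Sum.elim N₁.pre N₂.pre
  post t := Sum.elim (N₁.post t) (N₂.post t)

theorem step_sum {P₁ P₂ : Type} (N₁ : PetriNet P₁ L) (N₂ : PetriNet P₂ L) {M M' : P₁ ⊕ P₂ → ℕ}
    {t : L} : (N₁.sum N₂).step M t M' ↔
      N₁.step (M ∘ Sum.inl) t (M' ∘ Sum.inl) ∧ N₂.step (M ∘ Sum.inr) t (M' ∘ Sum.inr) := by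
  simp only [step, enabled, fire, sum, Sum.forall, funext_iff, Function.comp_apply,
    Sum.elim_inl, Sum.elim_inr]
  tauto

theorem wmg_sum {P₁ P₂ : Type} {N₁ : PetriNet P₁ L} {N₂ : PetriNet P₂ L} (h₁ : N₁.wmg)
    (h₂ : N₂.wmg) : (N₁.sum N₂).wmg :=
  ⟨Sum.rec h₁.1 h₂.1, Sum.rec h₁.2 h₂.2⟩

def blocking [DecidableEq L] (S : Set L) : PetriNet S L where
  pre s t := if t = s.1 then 1 else 0
  post _ _ := 0

theorem step_blocking_zero [DecidableEq L] (S : Set L) {t : L} {M' : S → ℕ} :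
    (blocking S).step 0 t M' ↔ t ∉ S ∧ M' = 0 := by
  simp only [step, enabled, fire, blocking, Subtype.forall, funext_iff, Pi.zero_apply]
  constructor
  · rintro ⟨hen, hM'⟩
    refine ⟨fun ht => by simpa using hen t ht, fun s hs => by simpa using hM' s hs⟩
  · rintro ⟨ht, hM'⟩
    refine ⟨fun s hs => ?_, fun s hs => by simp [hM' s hs]⟩
    rw [if_neg (by rintro rfl; exact ht hs)]

theorem wmg_blocking [DecidableEq L] (S : Set L) : (blocking S).wmg := by
  refine ⟨fun s t t' h h' => ?_, fun _ _ _ h => absurd h (lt_irrefl 0)⟩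
  simp only [blocking] at h h'
  split_ifs at h h' with ht ht'
  · exact ht.trans ht'.symm
  all_goals omega

theorem wmg_of_isCircuit {k : ℕ} {hk : 0 < k} {N : PetriNet (Fin k) L} (h : isCircuit hk N) :
    N.wmg := by
  obtain ⟨τ, hpre, hpost⟩ := h
  exact ⟨fun i t t' h h' => ((hpre i t).1 h).trans ((hpre i t').1 h').symm,
    fun i t t' h h' => ((hpost i t).1 h).trans ((hpost i t').1 h').symm⟩

end PetriNet

theorem Solves.exists_isCycleRun {P L : Type} {N : PetriNet P L} {w : List L}
    {hw : 0 < w.length} {M0 : P → ℕ} (h : Solves N M0 (circLTS w hw)) :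
    ∃ M : ℕ → P → ℕ, N.IsCycleRun w hw M ∧ Function.Periodic M w.length := by
  obtain ⟨ζ, -, htr⟩ := h
  let state : ℕ → Fin w.length := fun c => ⟨c % w.length, Nat.mod_lt _ hw⟩
  have hstate : ∀ c, (state c).val + 1 ≡ c + 1 [MOD w.length] :=
    fun c => (Nat.mod_modEq c _).add_right 1
  refine ⟨fun c => (ζ.symm (state c)).1, ?_, fun c => by simp [state]⟩
  intro c t X
  constructor
  · intro hstep
    have hX : N.Reach M0 X := (ζ.symm (state c)).2.tail ⟨t, hstep⟩
    have htr' := (htr _ t ⟨X, hX⟩).1 hstep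
    rw [ζ.apply_symm_apply] at htr'
    obtain ⟨ht, hnext⟩ := htr'
    refine ⟨ht, ?_⟩
    have hζX : ζ ⟨X, hX⟩ = state (c + 1) := Fin.ext (hnext.trans (hstate c))
    show X = (ζ.symm (state (c + 1))).1
    rw [← hζX, ζ.symm_apply_apply]
  · rintro ⟨rfl, rfl⟩
    refine (htr _ _ _).2 ?_
    rw [ζ.apply_symm_apply, ζ.apply_symm_apply]
    exact ⟨rfl, (hstate c).symm⟩

theorem wmg_restrictNet {Pl T : Type} {k : ℕ} {N : PetriNet Pl T} (π : Fin k → Pl)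
    (hN : N.wmg) : (restrictNet N π).wmg :=
  ⟨fun i => hN.1 (π i), fun i => hN.2 (π i)⟩

theorem Solves.of_equiv {P P' L S : Type} {N : PetriNet P L} {N' : PetriNet P' L}
    {M0 : P → ℕ} {A : LTS S L} (φ : (P → ℕ) ≃ (P' → ℕ))
    (hφ : ∀ M t M', N'.step (φ M) t (φ M') ↔ N.step M t M') (h : Solves N M0 A) :
    Solves N' (φ M0) A := by
  obtain ⟨ζ, hinit, htr⟩ := h
  have hφ' : ∀ X t X', N'.step X t X' ↔ N.step (φ.symm X) t (φ.symm X') := by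
    intro X t X'
    rw [← hφ, φ.apply_symm_apply, φ.apply_symm_apply]
  have hreach : ∀ X, N'.Reach (φ M0) X ↔ N.Reach M0 (φ.symm X) := by
    intro X
    constructor
    · intro hX
      have hlift := Relation.ReflTransGen.lift (p := fun X X' => ∃ t, N.step X t X') φ.symm
        (fun X X' ⟨t, hs⟩ => ⟨t, (hφ' X t X').1 hs⟩) _ _ hX
      simpa [Function.onFun, PetriNet.Reach] using hlift
    · intro hX
      have hlift := Relation.ReflTransGen.lift (p := fun X X' => ∃ t, N'.step X t X') φ
        (fun X X' ⟨t, hs⟩ => ⟨t, (hφ X t X').2 hs⟩) _ _ hX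
      simpa [Function.onFun, PetriNet.Reach] using hlift
  let ψ : {X // N'.Reach (φ M0) X} ≃ {X // N.Reach M0 X} := φ.symm.subtypeEquiv hreach
  refine ⟨ψ.trans ζ, ?_, fun X t X' => (hφ' X t X').trans (htr (ψ X) t (ψ X'))⟩
  rw [← hinit]
  exact congrArg ζ (Subtype.ext (φ.symm_apply_apply M0))

theorem Solves.restrictNet_of_equiv {P L S : Type} {k : ℕ} {N : PetriNet P L} {M0 : P → ℕ}
    {A : LTS S L} (e : Fin k ≃ P) (h : Solves N M0 A) : Solves (restrictNet N e) (M0 ∘ e) A := by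
  refine Solves.of_equiv (e.arrowCongr (Equiv.refl ℕ)).symm (fun M t M' => ?_) h
  simp [PetriNet.step, PetriNet.enabled, PetriNet.fire, restrictNet, funext_iff,
    e.forall_congr_left]

section Projection

variable {L : Type} [DecidableEq L] {a b : L}

theorem projPair_append (l l' : List L) :
    projPair (l ++ l') a b = projPair l a b ++ projPair l' a b :=
  List.filterMap_append

theorem projPair_singleton_of_mem {x : L} (h : x = a ∨ x = b) : projPair [x] a b = [⟨x, h⟩] := by
  simp [projPair, h]

theorem projPair_singleton_of_not_mem {x : L} (h : ¬(x = a ∨ x = b)) : projPair [x] a b = [] := by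
  simp [projPair, h]

theorem getElem?_projPair_length_take (w : List L) {j : ℕ} (hj : j < w.length)
    (h : w[j] = a ∨ w[j] = b) :
    (projPair w a b)[(projPair (w.take j) a b).length]? = some ⟨w[j], h⟩ := by
  have hsplit : projPair w a b
      = projPair (w.take j) a b ++ ⟨w[j], h⟩ :: projPair (w.drop (j + 1)) a b := by
    conv_lhs => rw [← List.take_append_drop j w, List.drop_eq_getElem_cons hj]
    rw [projPair_append, ← List.singleton_append, projPair_append, projPair_singleton_of_mem h,
      List.singleton_append]
  simp [hsplit]

theorem getElem?_flatten_replicate {α : Type} (v : List α) (hv : 0 < v.length) {ℓ c : ℕ}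
    (hc : c < ℓ * v.length) : (List.replicate ℓ v).flatten[c]? = some (cycLetter v hv c) := by
  induction ℓ generalizing c with
  | zero => simp at hc
  | succ ℓ ih =>
    rw [List.replicate_succ, List.flatten_cons]
    rcases Nat.lt_or_ge c v.length with hcv | hcv
    · rw [List.getElem?_append_left hcv, cycLetter_of_lt v hv hcv, List.getElem?_eq_getElem]
    · rw [List.getElem?_append_right hcv, ih (by rw [add_one_mul] at hc; omega)]
      obtain ⟨d, rfl⟩ := Nat.exists_eq_add_of_le hcv
      rw [Nat.add_sub_cancel_left, add_comm, cycLetter_periodic v hv d]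

def pairCount (w : List L) (hw : 0 < w.length) (a b : L) (j : ℕ) : ℕ :=
  (projPair (cycPrefix w hw j) a b).length

variable (w : List L) (hw : 0 < w.length)

theorem pairCount_succ_of_mem {j : ℕ} (h : cycLetter w hw j = a ∨ cycLetter w hw j = b) :
    pairCount w hw a b (j + 1) = pairCount w hw a b j + 1 := by
  simp [pairCount, cycPrefix_succ, projPair_append, projPair_singleton_of_mem h]

theorem pairCount_succ_of_not_mem {j : ℕ} (h : ¬(cycLetter w hw j = a ∨ cycLetter w hw j = b)) :
    pairCount w hw a b (j + 1) = pairCount w hw a b j := by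
  simp [pairCount, cycPrefix_succ, projPair_append, projPair_singleton_of_not_mem h]

theorem pairCount_length_add (j : ℕ) :
    pairCount w hw a b (w.length + j) = (projPair w a b).length + pairCount w hw a b j := by
  rw [pairCount, cycPrefix_add_of_periodic w hw (cycLetter_periodic w hw), cycPrefix_length,
    projPair_append, List.length_append, pairCount]

theorem pairCount_of_le {j : ℕ} (hj : j ≤ w.length) :
    pairCount w hw a b j = (projPair (w.take j) a b).length := by
  rw [pairCount, cycPrefix_of_le w hw hj]

end Projection

section Components

variable {L : Type} [DecidableEq L]

/-- The hypothesis on an adjacent pair `a b`, with the circuit system solving `v` replaced by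
a run of it around `v`. -/
structure PairComponent (w : List L) (a b : L) where
  v : List {x // x = a ∨ x = b}
  length_pos : 0 < v.length
  ℓ : ℕ
  proj_eq : projPair w a b = (List.replicate ℓ v).flatten
  k : ℕ
  net : PetriNet (Fin k) {x // x = a ∨ x = b}
  wmg : net.wmg
  run : ℕ → Fin k → ℕ
  isCycleRun : net.IsCycleRun v length_pos run
  periodic : Function.Periodic run v.length

namespace PairComponent

variable {w : List L} {a b : L}

theorem nonempty_of_cyclicCircuitSolvable {v : List {x // x = a ∨ x = b}} {ℓ : ℕ}
    (hu : projPair w a b = (List.replicate ℓ v).flatten) (hv : cyclicCircuitSolvable v) :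
    Nonempty (PairComponent w a b) := by
  obtain ⟨hv, k, _, N, M0, hcirc, hsolves⟩ := hv
  obtain ⟨M, hM, hper⟩ := hsolves.exists_isCycleRun
  exact ⟨⟨v, hv, ℓ, hu, k, N, PetriNet.wmg_of_isCircuit hcirc, M, hM, hper⟩⟩

variable (C : PairComponent w a b) (hw : 0 < w.length)

theorem length_projPair : (projPair w a b).length = C.ℓ * C.v.length := by
  simp [C.proj_eq]

theorem val_cycLetter_pairCount {j : ℕ} (h : cycLetter w hw j = a ∨ cycLetter w hw j = b) :
    (cycLetter C.v C.length_pos (pairCount w hw a b j)).val = cycLetter w hw j := by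
  induction j using Nat.strong_induction_on with
  | _ j ih =>
    rcases Nat.lt_or_ge j w.length with hj | hj
    · rw [cycLetter_of_lt w hw hj] at h ⊢
      have hproj := getElem?_projPair_length_take w hj h
      have hlt : (projPair (w.take j) a b).length < C.ℓ * C.v.length := by
        rw [← C.length_projPair]
        exact (List.getElem?_eq_some_iff.1 hproj).1
      rw [C.proj_eq, getElem?_flatten_replicate C.v C.length_pos hlt] at hproj
      rw [pairCount_of_le w hw hj.le, Option.some_inj.1 hproj]
    · obtain ⟨j, rfl⟩ := Nat.exists_eq_add_of_le hj
      have hper : cycLetter w hw (w.length + j) = cycLetter w hw j := by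
        rw [add_comm, cycLetter_periodic w hw j]
      rw [hper] at h ⊢
      rw [pairCount_length_add, C.length_projPair, add_comm,
        cycLetter_periodic_mul C.v C.length_pos C.ℓ, ih j (by omega) h]

theorem val_cycLetter_pairCount_of_first {j k : ℕ} (hk : cycLetter w hw (j + k) = a)
    (hb : ∀ i ≤ k, cycLetter w hw (j + i) ≠ b) :
    (cycLetter C.v C.length_pos (pairCount w hw a b j)).val = a := by
  induction k generalizing j with
  | zero => exact (C.val_cycLetter_pairCount hw (Or.inl hk)).trans hk
  | succ k ih =>
    by_cases hj : cycLetter w hw j = a ∨ cycLetter w hw j = b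
    · rw [C.val_cycLetter_pairCount hw hj]
      exact hj.resolve_right (hb 0 (Nat.zero_le _))
    · rw [← pairCount_succ_of_not_mem w hw hj]
      refine ih (by rwa [add_right_comm, add_assoc]) fun i hi => ?_
      rw [add_right_comm, add_assoc]
      exact hb (i + 1) (by omega)

end PairComponent

end Components

section Adjacency

variable {L : Type} (w : List L) (hw : 0 < w.length)

theorem cAdj_cycLetter {i : ℕ} (h : cycLetter w hw i ≠ cycLetter w hw (i + 1)) :
    cAdj w (cycLetter w hw i) (cycLetter w hw (i + 1)) := by
  have hcur : cycLetter w hw i = cycLetter w hw (i % w.length) :=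
    ((cycLetter_periodic w hw).map_mod_nat i).symm
  have hnext : cycLetter w hw (i + 1) = cycLetter w hw (i % w.length + 1) := by
    simp [cycLetter, Nat.add_mod]
  rw [hnext, hcur] at h ⊢
  have hr : i % w.length < w.length := Nat.mod_lt _ hw
  generalize i % w.length = r at h hr ⊢
  rcases Nat.lt_or_ge (r + 1) w.length with hr1 | hr1
  · rw [cycLetter_of_lt w hw hr1, cycLetter_of_lt w hw hr] at h ⊢
    refine ⟨h, Or.inl ⟨w.take r, w.drop (r + 2), ?_⟩⟩
    rw [← List.drop_eq_getElem_cons hr1, ← List.drop_eq_getElem_cons hr, List.take_append_drop]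
  · obtain rfl : r = w.length - 1 := by omega
    obtain ⟨x, xs, rfl⟩ := List.exists_cons_of_length_pos hw
    rcases List.eq_nil_or_concat xs with rfl | ⟨ys, y, rfl⟩
    · exact absurd (by simp [cycLetter]) h
    · have hwrap : cycLetter _ hw ((x :: ys.concat y).length - 1) = y ∧
          cycLetter _ hw ((x :: ys.concat y).length - 1 + 1) = x := by
        simp [cycLetter]
      rw [hwrap.1, hwrap.2] at h ⊢
      exact ⟨h, Or.inr ⟨ys, by simp⟩⟩

variable [DecidableEq L] {w hw}

theorem exists_cAdj_of_mem {t : L} (ht : t ∈ w) {j : ℕ} (hne : cycLetter w hw j ≠ t) :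
    ∃ s, cAdj w s t ∧ ∃ k, cycLetter w hw (j + k) = s ∧ ∀ i ≤ k, cycLetter w hw (j + i) ≠ t := by
  obtain ⟨p, hp, rfl⟩ := List.getElem_of_mem ht
  have hex : ∃ m, cycLetter w hw (j + m) = w[p] := by
    refine ⟨p + j * w.length - j, ?_⟩
    have hj : j ≤ j * w.length := Nat.le_mul_of_pos_right j hw
    rw [show j + (p + j * w.length - j) = p + j * w.length by omega,
      cycLetter_periodic_mul w hw j, cycLetter_of_lt w hw hp]
  have hfirst : Nat.find hex ≠ 0 := fun h0 => hne (by simpa [h0] using Nat.find_spec hex)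
  obtain ⟨k, hk⟩ := Nat.exists_eq_succ_of_ne_zero hfirst
  have hbefore : ∀ i ≤ k, cycLetter w hw (j + i) ≠ w[p] :=
    fun i hi => Nat.find_min hex (by omega)
  have hat : cycLetter w hw (j + k + 1) = w[p] := by
    simpa [hk, add_assoc] using Nat.find_spec hex
  refine ⟨cycLetter w hw (j + k), ?_, k, rfl, hbefore⟩
  rw [← hat]
  exact cAdj_cycLetter w hw (by rw [hat]; exact hbefore k le_rfl)

end Adjacency

section Composite

variable {L : Type} [DecidableEq L]

abbrev AdjPair (w : List L) : Type := {p : L × L // cAdj w p.1 p.2}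

variable {w : List L} (hw : 0 < w.length) (C : ∀ e : AdjPair w, PairComponent w e.1.1 e.1.2)

def compositeNet : PetriNet ((Σ e, Fin (C e).k) ⊕ {t | t ∉ w}) L :=
  (PetriNet.sigma fun e => (C e).net.liftAlphabet).sum (PetriNet.blocking {t | t ∉ w})

def compositeRun (j : ℕ) : (Σ e, Fin (C e).k) ⊕ {t | t ∉ w} → ℕ :=
  Sum.elim (fun q => (C q.1).run (pairCount w hw q.1.1.1 q.1.1.2 j) q.2) 0

theorem compositeNet_wmg : (compositeNet C).wmg :=
  PetriNet.wmg_sum (PetriNet.wmg_sigma fun e => PetriNet.wmg_liftAlphabet _ (C e).wmg)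
    (PetriNet.wmg_blocking _)

theorem compositeRun_periodic : Function.Periodic (compositeRun hw C) w.length := by
  intro j
  funext q
  rcases q with ⟨e, q⟩ | t
  · simp only [compositeRun, Sum.elim_inl]
    rw [add_comm, pairCount_length_add, (C e).length_projPair, add_comm]
    exact congrFun ((C e).periodic.nat_mul (C e).ℓ _) q
  · rfl

theorem compositeRun_step (j : ℕ) :
    (compositeNet C).step (compositeRun hw C j) (cycLetter w hw j) (compositeRun hw C (j + 1)) := by
  refine (PetriNet.step_sum _ _).2 ⟨(PetriNet.step_sigma _).2 fun e => ?_, ?_⟩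
  · show (C e).net.liftAlphabet.step ((C e).run (pairCount w hw e.1.1 e.1.2 j)) _
      ((C e).run (pairCount w hw e.1.1 e.1.2 (j + 1)))
    by_cases h : cycLetter w hw j = e.1.1 ∨ cycLetter w hw j = e.1.2
    · rw [PetriNet.step_liftAlphabet_of_mem (C e).net h, pairCount_succ_of_mem w hw h]
      have hletter : cycLetter (C e).v (C e).length_pos (pairCount w hw e.1.1 e.1.2 j)
          = ⟨cycLetter w hw j, h⟩ := Subtype.ext ((C e).val_cycLetter_pairCount hw h)
      simpa only [hletter] using (C e).isCycleRun.step (pairCount w hw e.1.1 e.1.2 j)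
    · rw [PetriNet.step_liftAlphabet_of_not_mem (C e).net h, pairCount_succ_of_not_mem w hw h]
  · exact (PetriNet.step_blocking_zero _).2 ⟨not_not.2 (List.getElem_mem _), rfl⟩

theorem eq_cycLetter_of_compositeRun_step {j : ℕ} {t : L} {M' : _ → ℕ}
    (h : (compositeNet C).step (compositeRun hw C j) t M') : t = cycLetter w hw j := by
  obtain ⟨hcomp, hblock⟩ := (PetriNet.step_sum _ _).1 h
  have ht : t ∈ w := not_not.1 ((PetriNet.step_blocking_zero _).1 hblock).1
  by_contra hne
  obtain ⟨s, hadj, k, hk, hnt⟩ := exists_cAdj_of_mem ht (Ne.symm hne)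
  let e : AdjPair w := ⟨(s, t), hadj⟩
  have hstep : (C e).net.step ((C e).run (pairCount w hw s t j)) ⟨t, Or.inr rfl⟩
      (fun q => M' (Sum.inl ⟨e, q⟩)) := by
    have hcomp_e := (PetriNet.step_sigma _).1 hcomp e
    rwa [PetriNet.step_liftAlphabet_of_mem (C e).net (Or.inr rfl)] at hcomp_e
  have hletter := ((C e).isCycleRun _ _ _).1 hstep
  have hs := (C e).val_cycLetter_pairCount_of_first hw hk hnt
  exact hadj.1 (hs.symm.trans (congrArg Subtype.val hletter.1).symm)

theorem compositeRun_isCycleRun : (compositeNet C).IsCycleRun w hw (compositeRun hw C) :=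
  .of_step (compositeRun_step hw C) fun _ _ _ => eq_cycLetter_of_compositeRun_step hw C

end Composite

/-- sufficient condition for cyclic WMG-solvability. -/
theorem stmt2 {L : Type} [Fintype L] [DecidableEq L] (w : List L)
    (hprime : primeVec (fun t => parikh w t))
    (hadj : ∀ a b : L, cAdj w a b →
      ∃ (v : List {x : L // x = a ∨ x = b}) (ℓ : ℕ), 0 < ℓ ∧
        projPair w a b = (List.replicate ℓ v).flatten ∧
        primeVec (fun t => parikh v t) ∧
        cyclicCircuitSolvable v) :
    cyclicWMGSolvable w := by
  classical
  have hw := length_pos_of_primeVec hprime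
  have hC : ∀ e : AdjPair w, Nonempty (PairComponent w e.1.1 e.1.2) := fun e => by
    obtain ⟨v, ℓ, -, hu, -, hv⟩ := hadj e.1.1 e.1.2 e.2
    exact PairComponent.nonempty_of_cyclicCircuitSolvable hu hv
  let C := fun e => (hC e).some
  let places := Fintype.equivFin ((Σ e, Fin (C e).k) ⊕ {t | t ∉ w})
  have hsolves := (compositeRun_isCycleRun hw C).solves (compositeRun_periodic hw C) hprime
  exact ⟨hw, _, restrictNet (compositeNet C) places.symm, _,
    wmg_restrictNet _ (compositeNet_wmg C), hsolves.restrictNet_of_equiv places.symm⟩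
end

section
/- Let TS be the circular labelled transition system induced by a word w=w1…wk over alphabet T, with states s0,…,s(k−1). If the Parikh vector P(w) is prime, then every states separation problem of TS is solvable: for any two distinct states si≠sj there exists a region (R,B,F) of TS with R(si)≠R(sj). -/
/-!
Let `P` be the Parikh vector of `w` and `Q` that of the segment read from `s_i` to `s_j`
(`i < j`). A weight `e : L → ℤ` with `P · e = 0` yields a region: the prefix sums of `e`
along `w` return to their start after one full turn, so they are well defined on the cycle,
and after a shift they are nonnegative. This region separates `s_i` from `s_j` as soon as
`Q · e ≠ 0`. Such an `e` exists unless `Q` is proportional to `P`, and proportionality is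
excluded by primality: it would give `|w| · Q = (j - i) · P`, hence `|w| ∣ j - i`.
-/

theorem List.sum_map_eq_sum_count {ι M : Type*} [Fintype ι] [DecidableEq ι] [AddCommMonoid M]
    (l : List ι) (f : ι → M) : (l.map f).sum = ∑ t, l.count t • f t := by
  rw [Finset.sum_list_map_count]
  refine Finset.sum_subset (Finset.subset_univ _) fun t _ ht => ?_
  rw [List.count_eq_zero_of_not_mem (mt List.mem_toFinset.2 ht), zero_smul]

theorem List.sum_count_eq_length {ι : Type*} [Fintype ι] [DecidableEq ι] (l : List ι) :
    ∑ t, l.count t = l.length := by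
  have := l.sum_map_eq_sum_count fun _ => (1 : ℕ)
  simp only [List.map_const', List.sum_replicate, smul_eq_mul, mul_one] at this
  exact this.symm

section Separation

variable {L : Type} [Fintype L]

theorem exists_mul_ne_mul_of_gcd_eq_one {P Q : L → ℕ} (hP : Finset.univ.gcd P = 1)
    (hQ : 0 < ∑ t, Q t) (hQP : ∑ t, Q t < ∑ t, P t) : ∃ s t, P s * Q t ≠ P t * Q s := by
  by_contra! hprop
  have hdvd : ∀ t, (∑ s, P s) ∣ P t * ∑ s, Q s := fun t =>
    ⟨Q t, by rw [Finset.mul_sum, Finset.sum_mul]; exact Finset.sum_congr rfl fun s _ => hprop t s⟩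
  have : (∑ s, P s) ∣ ∑ s, Q s := by
    have := Finset.dvd_gcd (s := Finset.univ) fun t _ => hdvd t
    rwa [Finset.gcd_mul_right, hP, one_mul, normalize_eq] at this
  exact absurd (Nat.le_of_dvd hQ this) (not_le.2 hQP)

theorem exists_dotProduct_eq_zero_ne_zero {R : Type*} [CommRing R] [DecidableEq L]
    {P Q : L → R} {s t : L} (hst : P s * Q t ≠ P t * Q s) :
    ∃ e : L → R, P ⬝ᵥ e = 0 ∧ Q ⬝ᵥ e ≠ 0 := by
  refine ⟨fun x => (if x = s then P t else 0) - (if x = t then P s else 0), ?_, ?_⟩ <;>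
    simp only [dotProduct, mul_sub, mul_ite, mul_zero, Finset.sum_sub_distrib,
      Finset.sum_ite_eq', Finset.mem_univ, if_true]
  · ring
  · exact fun h => hst (by linear_combination -h)

end Separation

theorem exists_region_of_potential {S L : Type} [Fintype S] [Fintype L] (A : LTS S L)
    (V : S → ℤ) (e : L → ℤ) (hV : ∀ s t s', A.tr s t s' → V s' = V s + e t) :
    ∃ (R : S → ℕ) (B F : L → ℕ) (c : ℤ), isRegion A R B F ∧ ∀ s, (R s : ℤ) = V s + c := by
  set c := ∑ s, |V s| + ∑ t, |e t|
  have hV_le : ∀ s, |V s| ≤ ∑ s, |V s| := fun s =>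
    Finset.single_le_sum (fun s _ => abs_nonneg (V s)) (Finset.mem_univ s)
  have he_le : ∀ t, |e t| ≤ ∑ t, |e t| := fun t =>
    Finset.single_le_sum (fun t _ => abs_nonneg (e t)) (Finset.mem_univ t)
  have hbound : ∀ s t, |e t| ≤ V s + c := fun s t => by
    linarith [hV_le s, he_le t, neg_abs_le (V s)]
  have hnonneg : ∀ s, 0 ≤ V s + c := fun s => by
    linarith [hV_le s, neg_abs_le (V s), Finset.sum_nonneg fun t (_ : t ∈ Finset.univ) =>
      abs_nonneg (e t)]
  refine ⟨fun s => (V s + c).toNat, fun t => (-e t).toNat, fun t => (e t).toNat, c, ?_,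
    fun s => Int.toNat_of_nonneg (hnonneg s)⟩
  intro s t s' hst
  have := hbound s t
  have := neg_abs_le (e t)
  have := le_abs_self (e t)
  dsimp only
  rw [hV s t s' hst]
  constructor <;> omega

theorem prefix_sum_eq_add_of_circLTS_tr {L : Type} (w : List L) (hw : 0 < w.length) (e : L → ℤ)
    (he : (w.map e).sum = 0) (s : Fin w.length) (t : L) (s' : Fin w.length)
    (hst : (circLTS w hw).tr s t s') :
    ((w.take s'.val).map e).sum = ((w.take s.val).map e).sum + e t := by
  obtain ⟨rfl, hs'⟩ := hst
  have hsucc : ((w.take (s.val + 1)).map e).sum = ((w.take s.val).map e).sum + e (w.get s) := by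
    rw [List.take_add_one, List.getElem?_eq_getElem s.isLt]
    simp
  rcases Nat.lt_or_ge (s.val + 1) w.length with h | h
  · rw [hs', Nat.mod_eq_of_lt h, hsucc]
  · have hlast : s.val + 1 = w.length := by omega
    rw [hs', hlast, Nat.mod_self, ← hsucc, hlast, List.take_length, he]
    simp

theorem exists_region_separating_of_lt {L : Type} [Fintype L] [DecidableEq L] (w : List L) (hw : 0 < w.length)
    (hprime : primeVec (fun t => parikh w t)) {i j : Fin w.length} (hij : i.val < j.val) :
    ∃ (R : Fin w.length → ℕ) (B F : L → ℕ), isRegion (circLTS w hw) R B F ∧ R i ≠ R j := by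
  set u := (w.take j.val).drop i.val
  have htake : w.take j.val = w.take i.val ++ u := by
    rw [← List.take_append_drop i.val (w.take j.val), List.take_take, min_eq_left hij.le]
  have hu_len : u.length = j.val - i.val := by simp [u]
  obtain ⟨s, t, hst⟩ := exists_mul_ne_mul_of_gcd_eq_one (Q := fun t => u.count t) hprime
    (by rw [List.sum_count_eq_length]; omega)
    (by simp only [parikh]; rw [List.sum_count_eq_length, List.sum_count_eq_length]; omega)
  obtain ⟨e, hPe, hQe⟩ := exists_dotProduct_eq_zero_ne_zero (P := fun t => (w.count t : ℤ))
    (Q := fun t => (u.count t : ℤ)) (s := s) (t := t) (by exact_mod_cast hst)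
  have hsum : ∀ l : List L, (l.map e).sum = (fun x => (l.count x : ℤ)) ⬝ᵥ e := fun l => by
    simp [List.sum_map_eq_sum_count, dotProduct]
  obtain ⟨R, B, F, c, hreg, hR⟩ := exists_region_of_potential (circLTS w hw)
    (fun s => ((w.take s.val).map e).sum) e
    (prefix_sum_eq_add_of_circLTS_tr w hw e (by rw [hsum]; exact hPe))
  refine ⟨R, B, F, hreg, fun hRij => hQe ?_⟩
  have := congrArg (fun n : ℕ => (n : ℤ)) hRij
  simp only [hR, htake, List.map_append, List.sum_append, hsum u] at this
  linarith

/-- all SSPs of a prime circular LTS are solvable. -/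
theorem stmt4 {L : Type} [Fintype L] [DecidableEq L] (w : List L) (hw : 0 < w.length)
    (hprime : primeVec (fun t => parikh w t)) :
    ∀ i j : Fin w.length, i ≠ j →
      ∃ (R : Fin w.length → ℕ) (B F : L → ℕ),
        isRegion (circLTS w hw) R B F ∧ R i ≠ R j := by
  intro i j hij
  rcases Nat.lt_or_gt_of_ne (Fin.val_ne_of_ne hij) with h | h
  · exact exists_region_separating_of_lt w hw hprime h
  · obtain ⟨R, B, F, hreg, hne⟩ := exists_region_separating_of_lt w hw hprime h
    exact ⟨R, B, F, hreg, hne.symm⟩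
end

section
/- Suppose a word w over a finite alphabet T is cyclically solvable by a weighted marked graph. Let a≠b be labels such that the factor ab occurs circularly in w, beginning at states s_r and s_q of the circular LTS induced by w (possibly r=q, reading once around the circle). Set g=gcd(P(w)(a),P(w)(b)), m=P(w)(b)/g and n=P(w)(a)/g. Then for every state s_j lying on the circular path from s_r to s_q: if P_rj(a)≠0 then n·P_rj(b) < m·P_rj(a) + n, and if P_jq(a)≠0 then m·P_jq(a) < n·P_jq(b) + n. -/
/-!
In a marked graph solving the circle, `b` is disabled at `s_r` but enabled one step later, after
`a` fired; so some place `p` has `a` as its only input, `b` as its only output, and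
`M_r(p) < W(p,b)`. Its token count along the circle is
`M_j(p) = M_r(p) + W(a,p)·P_rj(a) - W(p,b)·P_rj(b) ≥ 0`, and since the marking returns after one
turn, `W(a,p)·P(w)(a) = W(p,b)·P(w)(b)`. Eliminating the weights gives the first inequality;
the second comes in the same way from the place blocking `b` at `s_q`.
-/

def factorAt {T : Type} (u : ℕ → T) (j ℓ : ℕ) : List T :=
  (List.range ℓ).map fun i => u (j + i)

def circGet {T : Type} (w : List T) (hw : 0 < w.length) (k : ℕ) : T :=
  w.get ⟨k % w.length, Nat.mod_lt _ hw⟩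

theorem circGet_val {T : Type} (w : List T) (hw : 0 < w.length) (i : Fin w.length) :
    circGet w hw i = w.get i := by
  simp only [circGet, Nat.mod_eq_of_lt i.isLt]

theorem factorAt_circGet_length {T : Type} (w : List T) (hw : 0 < w.length) (j : ℕ) :
    factorAt (circGet w hw) j w.length = w.rotate j := by
  apply List.ext_get
  · simp [factorAt]
  · intro i _ _
    simp [factorAt, circGet, List.getElem_rotate, Nat.add_comm j i]

theorem count_factorAt_circGet_length {T : Type} [DecidableEq T] (w : List T)
    (hw : 0 < w.length) (j : ℕ) (t : T) :
    (factorAt (circGet w hw) j w.length).count t = w.count t := by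
  rw [factorAt_circGet_length]
  exact (List.rotate_perm w j).count_eq t

theorem add_add_sub_mod_mod_of_lt {n j q : ℕ} (hj : j < n) (hq : q < n) :
    (j + (q + n - j) % n) % n = q := by
  rw [Nat.add_mod_mod, show j + (q + n - j) = q + n by omega, Nat.add_mod_right,
    Nat.mod_eq_of_lt hq]

namespace PetriNet

variable {P T : Type}

def IsPlaceBetween (N : PetriNet P T) (p : P) (a b : T) : Prop :=
  (∀ t, t ≠ a → N.post t p = 0) ∧ ∀ t, t ≠ b → N.pre p t = 0

variable {N : PetriNet P T}

theorem step_apply {M M' : P → ℕ} {t : T} (h : N.step M t M') (p : P) :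
    (M' p : ℤ) = M p + N.post t p - N.pre p t := by
  have := h.1 p
  rw [h.2, fire]
  omega

theorem wmg.isPlaceBetween (h : N.wmg) {p : P} {a b : T} (ha : 0 < N.post a p)
    (hb : 0 < N.pre p b) : N.IsPlaceBetween p a b :=
  ⟨fun t ht => by_contra fun h' => ht (h.2 p t a (Nat.pos_of_ne_zero h') ha),
    fun t ht => by_contra fun h' => ht (h.1 p t b (Nat.pos_of_ne_zero h') hb)⟩

theorem exists_place_of_step_enables {M M' : P → ℕ} {a b : T} (hstep : N.step M a M')
    (hM : ¬ N.enabled M b) (hM' : N.enabled M' b) :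
    ∃ p, M p < N.pre p b ∧ 0 < N.post a p := by
  simp only [enabled, not_forall, not_le] at hM
  obtain ⟨p, hp⟩ := hM
  have := hM' p
  rw [hstep.2, fire] at this
  exact ⟨p, hp, by omega⟩

section Run

variable {M : ℕ → P → ℕ} {u : ℕ → T}

theorem wmg.exists_place_blocking (h : N.wmg) {a b : T} (hab : a ≠ b)
    (hrun : ∀ k, N.step (M k) (u k) (M (k + 1)))
    (henab : ∀ k t, N.enabled (M k) t → t = u k) {i : ℕ} (ha : u i = a) (hb : u (i + 1) = b) :
    ∃ p, N.IsPlaceBetween p a b ∧ M i p < N.pre p b := by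
  have hblocked : ¬ N.enabled (M i) b := fun hen => hab (ha ▸ henab i b hen).symm
  obtain ⟨p, hp, hpost⟩ :=
    exists_place_of_step_enables (ha ▸ hrun i) hblocked (hb ▸ (hrun (i + 1)).1)
  exact ⟨p, h.isPlaceBetween hpost (by omega), hp⟩

variable [DecidableEq T] {p : P} {a b : T}

theorem IsPlaceBetween.run_apply (hp : N.IsPlaceBetween p a b) (hab : a ≠ b)
    (hrun : ∀ k, N.step (M k) (u k) (M (k + 1))) (j ℓ : ℕ) :
    (M (j + ℓ) p : ℤ) = M j p + N.post a p * (factorAt u j ℓ).count a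
      - N.pre p b * (factorAt u j ℓ).count b := by
  induction ℓ with
  | zero => simp [factorAt]
  | succ ℓ ih =>
    rw [← add_assoc, step_apply (hrun _) p, ih]
    simp only [factorAt, List.range_succ, List.map_append, List.map_cons, List.map_nil,
      List.count_append, List.count_singleton']
    by_cases ha : u (j + ℓ) = a
    · simp [ha, hab, hp.2 a hab]
      ring
    · by_cases hb : u (j + ℓ) = b
      · simp [hb, Ne.symm hab, hp.1 b (Ne.symm hab)]
        ring
      · simp [ha, hb, hp.1 _ ha, hp.2 _ hb]

theorem IsPlaceBetween.post_mul_count_eq (hp : N.IsPlaceBetween p a b) (hab : a ≠ b)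
    (hrun : ∀ k, N.step (M k) (u k) (M (k + 1))) {j n : ℕ} (hper : M (j + n) = M j) :
    N.post a p * (factorAt u j n).count a = N.pre p b * (factorAt u j n).count b := by
  have := hp.run_apply hab hrun j n
  rw [hper] at this
  exact_mod_cast (by linarith : (N.post a p : ℤ) * (factorAt u j n).count a
    = N.pre p b * (factorAt u j n).count b)

theorem IsPlaceBetween.mul_count_lt_of_blocked_start (hp : N.IsPlaceBetween p a b)
    (hab : a ≠ b) (hrun : ∀ k, N.step (M k) (u k) (M (k + 1))) {ca cb : ℕ}
    (hbal : N.post a p * ca = N.pre p b * cb) (hca : 0 < ca) {j : ℕ}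
    (hblock : M j p < N.pre p b) (ℓ : ℕ) :
    ca * (factorAt u j ℓ).count b < cb * (factorAt u j ℓ).count a + ca := by
  have hrun' := hp.run_apply hab hrun j ℓ
  have hx : N.pre p b * (factorAt u j ℓ).count b
      < N.post a p * (factorAt u j ℓ).count a + N.pre p b := by
    have : (0 : ℤ) ≤ M (j + ℓ) p := by positivity
    have : (M j p : ℤ) < N.pre p b := by exact_mod_cast hblock
    exact_mod_cast (by linarith : (N.pre p b * (factorAt u j ℓ).count b : ℤ)
      < N.post a p * (factorAt u j ℓ).count a + N.pre p b)
  refine Nat.lt_of_mul_lt_mul_left (a := N.pre p b) ?_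
  calc N.pre p b * (ca * (factorAt u j ℓ).count b)
      = ca * (N.pre p b * (factorAt u j ℓ).count b) := by ring
    _ < ca * (N.post a p * (factorAt u j ℓ).count a + N.pre p b) :=
        Nat.mul_lt_mul_of_pos_left hx hca
    _ = (N.post a p * ca) * (factorAt u j ℓ).count a + N.pre p b * ca := by ring
    _ = N.pre p b * (cb * (factorAt u j ℓ).count a + ca) := by rw [hbal]; ring

theorem IsPlaceBetween.mul_count_lt_of_blocked_end (hp : N.IsPlaceBetween p a b)
    (hab : a ≠ b) (hrun : ∀ k, N.step (M k) (u k) (M (k + 1))) {ca cb : ℕ}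
    (hbal : N.post a p * ca = N.pre p b * cb) (hca : 0 < ca) {j ℓ : ℕ}
    (hblock : M (j + ℓ) p < N.pre p b) :
    cb * (factorAt u j ℓ).count a < ca * (factorAt u j ℓ).count b + ca := by
  have hrun' := hp.run_apply hab hrun j ℓ
  have hx : N.post a p * (factorAt u j ℓ).count a
      < N.pre p b * (factorAt u j ℓ).count b + N.pre p b := by
    have : (0 : ℤ) ≤ M j p := by positivity
    have : (M (j + ℓ) p : ℤ) < N.pre p b := by exact_mod_cast hblock
    exact_mod_cast (by linarith : (N.post a p * (factorAt u j ℓ).count a : ℤ)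
      < N.pre p b * (factorAt u j ℓ).count b + N.pre p b)
  refine Nat.lt_of_mul_lt_mul_left (a := N.pre p b) ?_
  calc N.pre p b * (cb * (factorAt u j ℓ).count a)
      = ca * (N.post a p * (factorAt u j ℓ).count a) := by rw [← mul_assoc, ← hbal]; ring
    _ < ca * (N.pre p b * (factorAt u j ℓ).count b + N.pre p b) :=
        Nat.mul_lt_mul_of_pos_left hx hca
    _ = N.pre p b * (ca * (factorAt u j ℓ).count b + ca) := by ring

end Run

end PetriNet

theorem Solves.exists_marking {P T S : Type} {N : PetriNet P T} {M0 : P → ℕ} {A : LTS S T}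
    (h : Solves N M0 A) :
    ∃ M : S → P → ℕ, (∀ s t s', N.step (M s) t (M s') ↔ A.tr s t s') ∧
      ∀ s t, N.enabled (M s) t → ∃ s', A.tr s t s' := by
  obtain ⟨ζ, -, hζ⟩ := h
  refine ⟨fun s => (ζ.symm s).val, fun s t s' => by
    simpa [PetriNet.RG] using hζ (ζ.symm s) t (ζ.symm s'),
    fun s t hen => ?_⟩
  let M' : {M // N.Reach M0 M} :=
    ⟨N.fire (ζ.symm s).val t, (ζ.symm s).2.tail ⟨t, hen, rfl⟩⟩
  exact ⟨ζ M', by simpa using (hζ (ζ.symm s) t M').1 ⟨hen, rfl⟩⟩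

theorem Solves.exists_circular_run {P T : Type} {N : PetriNet P T} {M0 : P → ℕ} {w : List T}
    {hw : 0 < w.length} (h : Solves N M0 (circLTS w hw)) :
    ∃ M : ℕ → P → ℕ, Function.Periodic M w.length ∧
      (∀ k, N.step (M k) (circGet w hw k) (M (k + 1))) ∧
      ∀ k t, N.enabled (M k) t → t = circGet w hw k := by
  obtain ⟨M, hstep, henab⟩ := h.exists_marking
  refine ⟨fun k => M ⟨k % w.length, Nat.mod_lt _ hw⟩, fun k => by simp,
    fun k => (hstep _ _ _).2 ⟨rfl, by simp [Nat.add_mod]⟩,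
    fun k t hen => (henab _ t hen).elim fun _ ht => ht.1⟩

theorem div_mul_lt_div_mul_add_div {d m n k x y : ℕ} (hm : d ∣ m) (hn : d ∣ n) (hk : d ∣ k)
    (h : m * x < n * y + k) : m / d * x < n / d * y + k / d := by
  obtain ⟨m, rfl⟩ := hm
  obtain ⟨n, rfl⟩ := hn
  obtain ⟨k, rfl⟩ := hk
  rcases Nat.eq_zero_or_pos d with rfl | hd
  · simp at h
  · simp only [Nat.mul_div_cancel_left _ hd]
    exact Nat.lt_of_mul_lt_mul_left (a := d) (by linarith)

theorem stmt6_general {L : Type} [DecidableEq L] (w : List L) (hw : 0 < w.length)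
    (hsolv : cyclicWMGSolvable w) (a b : L) (hab : a ≠ b)
    (r q : Fin w.length)
    (hra : w.get r = a) (hrb : w.get ⟨(r.val + 1) % w.length, Nat.mod_lt _ hw⟩ = b)
    (hqa : w.get q = a) (hqb : w.get ⟨(q.val + 1) % w.length, Nat.mod_lt _ hw⟩ = b)
    (j : Fin w.length) :
    (segParikh w hw r j a ≠ 0 →
      (parikh w a / Nat.gcd (parikh w a) (parikh w b)) * segParikh w hw r j b <
        (parikh w b / Nat.gcd (parikh w a) (parikh w b)) * segParikh w hw r j a +
          parikh w a / Nat.gcd (parikh w a) (parikh w b)) ∧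
    (segParikh w hw j q a ≠ 0 →
      (parikh w b / Nat.gcd (parikh w a) (parikh w b)) * segParikh w hw j q a <
        (parikh w a / Nat.gcd (parikh w a) (parikh w b)) * segParikh w hw j q b +
          parikh w a / Nat.gcd (parikh w a) (parikh w b)) := by
  obtain ⟨_, k, N, M0, hwmg, hsolves⟩ := hsolv
  obtain ⟨M, hper, hrun, henab⟩ := Solves.exists_circular_run hsolves
  obtain ⟨p, hp, hpr⟩ :=
    hwmg.exists_place_blocking hab hrun henab ((circGet_val w hw r).trans hra) hrb
  obtain ⟨p', hp', hpq⟩ :=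
    hwmg.exists_place_blocking hab hrun henab ((circGet_val w hw q).trans hqa) hqb
  have hbal {p : Fin k} (hp : N.IsPlaceBetween p a b) :
      N.post a p * parikh w a = N.pre p b * parikh w b := by
    simpa only [parikh, count_factorAt_circGet_length] using
      hp.post_mul_count_eq hab hrun (hper 0)
  have hca : 0 < parikh w a := List.count_pos_iff.2 (hqa ▸ List.get_mem w q)
  have hq : M (j + (q + w.length - j) % w.length) p' < N.pre p' b := by
    rwa [← hper.map_mod_nat, add_add_sub_mod_mod_of_lt j.isLt q.isLt]
  -- `segParikh w hw j q` unfolds to counting in `factorAt (circGet w hw) j ((q + |w| - j) % |w|)`.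
  refine ⟨fun _ => div_mul_lt_div_mul_add_div (Nat.gcd_dvd_left _ _) (Nat.gcd_dvd_right _ _)
    (Nat.gcd_dvd_left _ _) ?_, fun _ => div_mul_lt_div_mul_add_div (Nat.gcd_dvd_right _ _)
    (Nat.gcd_dvd_left _ _) (Nat.gcd_dvd_left _ _) ?_⟩
  · exact hp.mul_count_lt_of_blocked_start hab hrun (hbal hp) hca hpr _
  · exact hp'.mul_count_lt_of_blocked_end hab hrun (hbal hp') hca hq

/-- necessary condition for cyclic WMG-solvability. -/
theorem stmt6 {L : Type} [Fintype L] [DecidableEq L] (w : List L) (hw : 0 < w.length)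
    (hsolv : cyclicWMGSolvable w) (a b : L) (hab : a ≠ b)
    (r q : Fin w.length)
    (hra : w.get r = a) (hrb : w.get ⟨(r.val + 1) % w.length, Nat.mod_lt _ hw⟩ = b)
    (hqa : w.get q = a) (hqb : w.get ⟨(q.val + 1) % w.length, Nat.mod_lt _ hw⟩ = b)
    (j : Fin w.length)
    (hj : r = q ∨ (j.val + w.length - r.val) % w.length ≤ (q.val + w.length - r.val) % w.length) :
    (segParikh w hw r j a ≠ 0 →
      (parikh w a / Nat.gcd (parikh w a) (parikh w b)) * segParikh w hw r j b <
        (parikh w b / Nat.gcd (parikh w a) (parikh w b)) * segParikh w hw r j a +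
          parikh w a / Nat.gcd (parikh w a) (parikh w b)) ∧
    (segParikh w hw j q a ≠ 0 →
      (parikh w b / Nat.gcd (parikh w a) (parikh w b)) * segParikh w hw j q a <
        (parikh w a / Nat.gcd (parikh w a) (parikh w b)) * segParikh w hw j q b +
          parikh w a / Nat.gcd (parikh w a) (parikh w b)) :=
  stmt6_general w hw hsolv a b hab r q hra hrb hqa hqb j
end

section
/- The word w = abcbad over the four-letter alphabet {a,b,c,d} is cyclically solvable by a choice-free net but is not cyclically solvable by a weighted marked graph. In particular, the equivalence between cyclic CF-solvability and cyclic WMG-solvability fails for four-letter alphabets. -/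
/-!
A choice-free solution of `abcbad` gives each letter its own input place; the six markings
reached along the word are pairwise distinct and enable exactly the next letter.

No weighted marked graph works. In state `s₀` the letter `b` is disabled, so some place `p`
lacks tokens for `b`; by choice-freeness `b` is the only output of `p`. The first `a` must
refill `p`, so in a marked graph `a` is its only input. Over one period `a` and `b` each fire
twice, hence they move the same number of tokens of `p`; but then the marking of `p` in `s₃`
equals the one in `s₀`, and `b` could not fire in `s₃`.
-/

theorem Solves.exists_markings {P L S : Type} {N : PetriNet P L} {M0 : P → ℕ} {A : LTS S L}
    (h : Solves N M0 A) :
    ∃ M : S → P → ℕ, M A.init = M0 ∧ (∀ s t s', A.tr s t s' → N.step (M s) t (M s')) ∧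
      ∀ s t, N.enabled (M s) t → ∃ s', A.tr s t s' := by
  obtain ⟨ζ, hinit, htr⟩ := h
  refine ⟨fun s => (ζ.symm s).1, ?_, fun s t s' hss' => ?_, fun s t ht => ?_⟩
  · show (ζ.symm A.init).1 = M0
    rw [← hinit, Equiv.symm_apply_apply]
    rfl
  · exact (htr _ t _).mpr (by simpa using hss')
  · have hreach : N.Reach M0 (N.fire (ζ.symm s).1 t) := (ζ.symm s).2.tail ⟨t, ht, rfl⟩
    refine ⟨ζ ⟨_, hreach⟩, ?_⟩
    simpa using (htr (ζ.symm s) t ⟨_, hreach⟩).mp ⟨ht, rfl⟩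

theorem solves_circLTS_of_cycle {P L : Type} {N : PetriNet P L} {w : List L}
    (hw : 0 < w.length) {μ : Fin w.length → P → ℕ} (hμ : Function.Injective μ)
    (henabled : ∀ i t, N.enabled (μ i) t ↔ t = w.get i)
    (hfire : ∀ i : Fin w.length,
      N.fire (μ i) (w.get i) = μ ⟨(i.val + 1) % w.length, Nat.mod_lt _ hw⟩) :
    Solves N (μ ⟨0, hw⟩) (circLTS w hw) := by
  have hstep : ∀ i t j, N.step (μ i) t (μ j) ↔ (circLTS w hw).tr i t j := by
    intro i t j
    simp only [PetriNet.step, henabled, circLTS, and_congr_right_iff]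
    rintro rfl
    rw [hfire, hμ.eq_iff, Fin.ext_iff]
  have hreach : ∀ i, N.Reach (μ ⟨0, hw⟩) (μ i) := by
    rintro ⟨k, hk⟩
    induction k with
    | zero => exact .refl
    | succ k ih =>
      refine (ih (by omega)).tail ⟨w.get ⟨k, by omega⟩, (hstep _ _ _).mpr ⟨rfl, ?_⟩⟩
      exact (Nat.mod_eq_of_lt hk).symm
  have hclosed : ∀ M, N.Reach (μ ⟨0, hw⟩) M → ∃ i, μ i = M := by
    intro M hM
    induction hM with
    | refl => exact ⟨_, rfl⟩
    | tail _ hlast ih =>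
      obtain ⟨i, rfl⟩ := ih
      obtain ⟨t, ht, rfl⟩ := hlast
      rw [(henabled i t).mp ht]
      exact ⟨_, (hfire i).symm⟩
  let g : Fin w.length → {M // N.Reach (μ ⟨0, hw⟩) M} := fun i => ⟨μ i, hreach i⟩
  have hg : Function.Bijective g := by
    refine ⟨fun i j hij => hμ (congrArg Subtype.val hij), fun M => ?_⟩
    obtain ⟨i, hi⟩ := hclosed M.1 M.2
    exact ⟨i, Subtype.ext hi⟩
  refine ⟨(Equiv.ofBijective g hg).symm, Equiv.ofBijective_symm_apply_apply g hg ⟨0, hw⟩, ?_⟩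
  intro s t s'
  obtain ⟨i, rfl⟩ := hg.2 s
  obtain ⟨j, rfl⟩ := hg.2 s'
  simp only [Equiv.ofBijective_symm_apply_apply]
  exact hstep i t j

theorem not_cyclicWMGSolvable_abcbad {L : Type} {a b c d : L} (hab : a ≠ b) (hac : a ≠ c)
    (had : a ≠ d) (hcb : c ≠ b) (hdb : d ≠ b) :
    ¬ cyclicWMGSolvable [a, b, c, b, a, d] := by
  rintro ⟨hw, k, N, M0, ⟨hcf, hin⟩, hsolves⟩
  obtain ⟨M, hM0, hstep, henabled⟩ := hsolves.exists_markings
  obtain ⟨p, hp⟩ : ∃ p, M0 p < N.pre p b := by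
    by_contra! hb
    obtain ⟨_, hba, -⟩ := henabled _ b (hM0 ▸ hb)
    exact hab hba.symm
  have hpre : ∀ t ≠ b, N.pre p t = 0 := fun t ht =>
    Nat.eq_zero_of_not_pos fun h => ht (hcf p t b h (by omega))
  have hpost : ∀ t ≠ a, 0 < N.post a p → N.post t p = 0 := fun t ht ha =>
    Nat.eq_zero_of_not_pos fun h => ht (hin p t a h ha)
  have hplace (i j : Fin 6) (t : L) (h : (circLTS _ hw).tr i t j) :
      N.pre p t ≤ M i p ∧ M j p = M i p - N.pre p t + N.post t p :=
    ⟨(hstep i t j h).1 p, congrFun (hstep i t j h).2 p⟩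
  have h01 := hplace 0 1 a ⟨rfl, rfl⟩
  have h12 := hplace 1 2 b ⟨rfl, rfl⟩
  have h23 := hplace 2 3 c ⟨rfl, rfl⟩
  have h34 := hplace 3 4 b ⟨rfl, rfl⟩
  have h45 := hplace 4 5 a ⟨rfl, rfl⟩
  have h50 := hplace 5 0 d ⟨rfl, by simp⟩
  have hM0' : M 0 = M0 := hM0
  rw [hM0'] at h01 h50
  rw [hpre a hab] at h01 h45
  rw [hpre c hcb] at h23
  rw [hpre d hdb] at h50
  have ha : 0 < N.post a p := by omega
  rw [hpost b hab.symm ha] at h12 h34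
  rw [hpost c hac.symm ha] at h23
  rw [hpost d had.symm ha] at h50
  omega

/-! Letters `a, b, c, d` are indexed by `0, 1, 2, 3`, and place `i` is the input place of
letter `i`; the markings are those reached from `(2, 2, 2, 0)` along `abcbad`. -/
namespace Abcbad

def pre (p k : Fin 4) : ℕ := if p = k then ![2, 3, 3, 2] k else 0

def post : Fin 4 → Fin 4 → ℕ := ![![0, 2, 0, 1], ![1, 0, 1, 0], ![0, 2, 0, 0], ![2, 0, 1, 0]]

def letter : Fin 6 → Fin 4 := ![0, 1, 2, 1, 0, 3]

def marking : Fin 6 → Fin 4 → ℕ :=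
  ![![2, 2, 2, 0], ![0, 4, 2, 1], ![1, 1, 3, 1], ![1, 3, 0, 1], ![2, 0, 1, 1], ![0, 2, 1, 2]]

theorem eq_of_pre_pos : ∀ p k, 0 < pre p k → k = p := by decide

theorem pre_le_marking_iff : ∀ i k, (∀ p, pre p k ≤ marking i p) ↔ k = letter i := by decide

theorem marking_fire : ∀ (i : Fin 6) p,
    marking i p - pre p (letter i) + post (letter i) p = marking ⟨(i.val + 1) % 6, by omega⟩ p := by
  decide

theorem marking_injective : Function.Injective marking := by decide

variable {L : Type}

def net (e : Fin 4 ≃ L) : PetriNet (Fin 4) L where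
  pre p t := pre p (e.symm t)
  post t p := post (e.symm t) p

theorem net_choiceFree (e : Fin 4 ≃ L) : (net e).choiceFree := fun p _ _ ht ht' =>
  e.symm.injective ((eq_of_pre_pos p _ ht).trans (eq_of_pre_pos p _ ht').symm)

end Abcbad

theorem cyclicCFSolvable_abcbad {L : Type} (e : Fin 4 ≃ L) :
    cyclicCFSolvable [e 0, e 1, e 2, e 1, e 0, e 3] := by
  have hword : ∀ i : Fin 6, [e 0, e 1, e 2, e 1, e 0, e 3].get i = e (Abcbad.letter i) := by
    intro i
    fin_cases i <;> rfl
  refine ⟨by simp, 4, Abcbad.net e, Abcbad.marking 0, Abcbad.net_choiceFree e, ?_⟩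
  refine solves_circLTS_of_cycle (w := [e 0, e 1, e 2, e 1, e 0, e 3]) (μ := Abcbad.marking) _
    Abcbad.marking_injective (fun i t => ?_) (fun i => ?_)
  · rw [hword, ← Equiv.symm_apply_eq]
    exact Abcbad.pre_le_marking_iff i (e.symm t)
  · funext p
    rw [hword]
    simpa [PetriNet.fire, Abcbad.net] using Abcbad.marking_fire i p

theorem stmt10_general {L : Type} [Fintype L] (a b c d : L)
    (hdist : [a, b, c, d].Pairwise (· ≠ ·)) (hcard : Fintype.card L = 4) :
    cyclicCFSolvable [a, b, c, b, a, d] ∧ ¬ cyclicWMGSolvable [a, b, c, b, a, d] := by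
  have hbij : Function.Bijective [a, b, c, d].get :=
    (Fintype.bijective_iff_injective_and_card _).mpr
      ⟨List.nodup_iff_injective_get.mp hdist, by simp [hcard]⟩
  let e : Fin 4 ≃ L := Equiv.ofBijective _ hbij
  have hne (i j : Fin 4) (hij : i ≠ j) : e i ≠ e j := e.injective.ne hij
  exact ⟨cyclicCFSolvable_abcbad e, not_cyclicWMGSolvable_abcbad (hne 0 1 (by decide))
    (hne 0 2 (by decide)) (hne 0 3 (by decide)) (hne 2 1 (by decide)) (hne 3 1 (by decide))⟩

/-- `abcbad` is cyclically CF-solvable but not cyclically WMG-solvable. -/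
theorem stmt10 {L : Type} [Fintype L] [DecidableEq L] (a b c d : L)
    (hdist : [a, b, c, d].Pairwise (· ≠ ·)) (hcard : Fintype.card L = 4) :
    cyclicCFSolvable [a, b, c, b, a, d] ∧ ¬ cyclicWMGSolvable [a, b, c, b, a, d] :=
  stmt10_general a b c d hdist hcard
end
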